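/- arXiv:1407.0610 — 8 statements merged into one kernel-verified Lean document; each statement's English description precedes it below -/
import Mathlib

section
/- For every σ ∈ [0, π/2], every a ≠ 0 and every θ ∈ ℝ, the pair of curves q(t) = γ(a,θ,t) and p(t) = (cos θ cos(at) − cos σ sin θ sin(at), sin θ, a) satisfies Hamilton's equations q̇ = ∂H/∂p, ṗ = −∂H/∂q for the Hamiltonian H(x,y,z,p_x,p_y,p_z) = ½(p_x² + (p_y + x cos σ · p_z)² + x² sin²σ · p_z²), with initial conditions q(0) = (0,0,0) and p(0) = (cos θ, sin θ, a). -/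
open Real

/-- First coordinate of the normal geodesic `γ(a,θ,t)` of the type-1 nilpotent
3-ARS with parameter `σ`. -/
noncomputable def xGeo (σ a θ t : ℝ) : ℝ :=
  (1 / a) * (cos θ * sin (a * t) + (cos (a * t) - 1) * cos σ * sin θ)

/-- Second coordinate of `γ(a,θ,t)`. -/
noncomputable def yGeo (σ a θ t : ℝ) : ℝ :=
  (1 / a) * ((sin (a * t) - a * t) * sin θ * cos σ ^ 2
    - (cos (a * t) - 1) * cos θ * cos σ + a * t * sin θ)

/-- Third coordinate of `γ(a,θ,t)`. -/
noncomputable def zGeo (σ a θ t : ℝ) : ℝ :=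
  (1 / (8 * a ^ 2)) *
    (4 * sin (2 * θ) * cos σ * cos (a * t) * (1 - cos (a * t))
      + cos (2 * θ) * (2 * a * t * sin σ ^ 2
        - sin (2 * a * t) * (1 + cos σ ^ 2) + 4 * sin (a * t) * cos σ ^ 2)
      + 2 * a * t * (1 + cos σ ^ 2)
      - sin (2 * a * t) * sin σ ^ 2 - 4 * sin (a * t) * cos σ ^ 2)

/-- The geodesic `γ(a,θ,t)` as a vector of `ℝ³`. -/
noncomputable def geo (σ a θ t : ℝ) : Fin 3 → ℝ :=
  ![xGeo σ a θ t, yGeo σ a θ t, zGeo σ a θ t]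

/-- The Hamiltonian `H(q,p) = ½(p_x² + (p_y + x cos σ p_z)² + x² sin²σ p_z²)`. -/
noncomputable def Ham (σ : ℝ) (q p : Fin 3 → ℝ) : ℝ :=
  (1 / 2) * ((p 0) ^ 2 + (p 1 + q 0 * cos σ * p 2) ^ 2
    + (q 0) ^ 2 * sin σ ^ 2 * (p 2) ^ 2)

/-- The covector curve `p(t) = (cos θ cos(at) − cos σ sin θ sin(at), sin θ, a)`. -/
noncomputable def pGeo (σ a θ t : ℝ) : Fin 3 → ℝ :=
  ![cos θ * cos (a * t) - cos σ * sin θ * sin (a * t), sin θ, a]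

lemma deriv_quad (c0 c1 c2 x : ℝ) : deriv (fun v : ℝ => c0 + c1*v + c2*v^2) x = c1 + 2*c2*x := by
  have h : HasDerivAt (fun v : ℝ => c0 + c1*v + c2*v^2) (c1 + 2*c2*x) x := by
    have h1 : HasDerivAt (fun v : ℝ => v) 1 x := hasDerivAt_id x
    have h2 := ((h1.const_mul c1).const_add c0).add ((hasDerivAt_pow 2 x).const_mul c2)
    refine h2.congr_deriv ?_
    push_cast; ring
  exact h.deriv

lemma hx (σ a θ t : ℝ) : HasDerivAt (fun s => xGeo σ a θ s)
    ((1/a) * (cos θ * (cos (a*t) * a) + ((-sin (a*t) * a) * cos σ) * sin θ)) t := by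
  simp only [xGeo]
  have hat : HasDerivAt (fun s : ℝ => a * s) (a * 1) t := (hasDerivAt_id t).const_mul a
  exact ((hat.sin.const_mul (cos θ)).add
    (((hat.cos.sub_const 1).mul_const (cos σ)).mul_const (sin θ))).const_mul (1/a) |>.congr_deriv (by ring)

lemma hy (σ a θ t : ℝ) : HasDerivAt (fun s => yGeo σ a θ s)
    ((1/a) * ((cos (a*t) * a - a) * sin θ * cos σ ^ 2
      + sin (a*t) * a * cos θ * cos σ + a * sin θ)) t := by
  simp only [yGeo]
  have hat : HasDerivAt (fun s : ℝ => a * s) (a * 1) t := (hasDerivAt_id t).const_mul a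
  exact ((((hat.sin.sub hat).mul_const (sin θ)).mul_const (cos σ ^ 2)
    |>.sub (((hat.cos.sub_const 1).mul_const (cos θ)).mul_const (cos σ)))
    |>.add (hat.mul_const (sin θ))).const_mul (1/a) |>.congr_deriv (by ring)

lemma hz (σ a θ t : ℝ) : HasDerivAt (fun s => zGeo σ a θ s)
    ((1/(8*a^2)) * (4 * sin (2*θ) * cos σ * (a * sin (a*t) * (2 * cos (a*t) - 1))
      + cos (2*θ) * (2 * a * sin σ ^ 2 - 2 * a * cos (2*a*t) * (1 + cos σ ^ 2)
        + 4 * a * cos (a*t) * cos σ ^ 2)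
      + 2 * a * (1 + cos σ ^ 2)
      - 2 * a * cos (2*a*t) * sin σ ^ 2 - 4 * a * cos (a*t) * cos σ ^ 2)) t := by
  simp only [zGeo]
  have hat : HasDerivAt (fun s : ℝ => a * s) (a * 1) t := (hasDerivAt_id t).const_mul a
  have h2at : HasDerivAt (fun s : ℝ => 2 * a * s) (2 * a * 1) t := (hasDerivAt_id t).const_mul (2*a)
  have h1 := (hat.cos.const_mul (4 * sin (2*θ) * cos σ)).mul (hat.cos.const_sub 1)
  have h2 := ((((h2at.mul_const (sin σ ^ 2)).sub (h2at.sin.mul_const (1 + cos σ ^ 2))).add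
      ((hat.sin.const_mul 4).mul_const (cos σ ^ 2)))).const_mul (cos (2*θ))
  have h3 := h2at.mul_const (1 + cos σ ^ 2)
  have h4 := h2at.sin.mul_const (sin σ ^ 2)
  have h5 := (hat.sin.const_mul 4).mul_const (cos σ ^ 2)
  exact (((((h1.add h2).add h3).sub h4).sub h5).const_mul (1/(8*a^2))).congr_deriv (by ring)

lemma hp0 (σ a θ t : ℝ) : HasDerivAt (fun s => pGeo σ a θ s 0)
    (-(cos θ * sin (a*t)) * a - cos σ * sin θ * cos (a*t) * a) t := by
  simp only [pGeo, Matrix.cons_val_zero]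
  have hat : HasDerivAt (fun s : ℝ => a * s) (a * 1) t := (hasDerivAt_id t).const_mul a
  exact ((hat.cos.const_mul (cos θ)).sub (hat.sin.const_mul (cos σ * sin θ))).congr_deriv (by ring)

/-- For every `σ ∈ [0,π/2]`, `a ≠ 0`, `θ ∈ ℝ`, the pair `(γ(a,θ,·), p(·))`
solves Hamilton's equations `q̇ = ∂H/∂p`, `ṗ = −∂H/∂q` with
`q(0) = (0,0,0)` and `p(0) = (cos θ, sin θ, a)`. -/
theorem stmt0 (σ a θ : ℝ) (hσ : σ ∈ Set.Icc 0 (π / 2)) (ha : a ≠ 0) :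
    geo σ a θ 0 = ![0, 0, 0] ∧
    pGeo σ a θ 0 = ![cos θ, sin θ, a] ∧
    (∀ t : ℝ, ∀ i : Fin 3,
      HasDerivAt (fun s => geo σ a θ s i)
        (deriv (fun v => Ham σ (geo σ a θ t) (Function.update (pGeo σ a θ t) i v))
          (pGeo σ a θ t i)) t ∧
      HasDerivAt (fun s => pGeo σ a θ s i)
        (-(deriv (fun v => Ham σ (Function.update (geo σ a θ t) i v) (pGeo σ a θ t))
          (geo σ a θ t i))) t) := by
  refine ⟨?_, ?_, ?_⟩
  · funext i; fin_cases i <;> simp [geo, xGeo, yGeo, zGeo]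
  · funext i; fin_cases i <;> simp [pGeo]
  intro t i
  have hpy3 := sin_sq_add_cos_sq σ
  have H0 : HasDerivAt (fun s => geo σ a θ s 0)
        (deriv (fun v => Ham σ (geo σ a θ t) (Function.update (pGeo σ a θ t) 0 v))
          (pGeo σ a θ t 0)) t ∧
      HasDerivAt (fun s => pGeo σ a θ s 0)
        (-(deriv (fun v => Ham σ (Function.update (geo σ a θ t) 0 v) (pGeo σ a θ t))
          (geo σ a θ t 0))) t := by
    constructor
    · rw [show (fun v => Ham σ (geo σ a θ t) (Function.update (pGeo σ a θ t) 0 v))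
          = (fun v => (1/2) * ((sin θ + xGeo σ a θ t * cos σ * a)^2
              + (xGeo σ a θ t)^2 * sin σ^2 * a^2) + 0 * v + (1/2) * v^2) from
        funext fun v => by simp [Ham, geo, pGeo, Function.update]; ring, deriv_quad]
      simp only [geo, pGeo, Matrix.cons_val_zero]
      exact (hx σ a θ t).congr_deriv (by field_simp; ring)
    · rw [show (fun v => Ham σ (Function.update (geo σ a θ t) 0 v) (pGeo σ a θ t))
          = (fun v => (1/2) * ((pGeo σ a θ t 0)^2 + sin θ^2)
              + (sin θ * cos σ * a) * v + ((1/2) * (cos σ^2 * a^2 + sin σ^2 * a^2)) * v^2) from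
        funext fun v => by simp [Ham, geo, pGeo, Function.update]; ring, deriv_quad]
      simp only [geo, Matrix.cons_val_zero]
      refine (hp0 σ a θ t).congr_deriv ?_
      simp only [xGeo]
      field_simp
      linear_combination ((cos θ * sin (a*t) + (cos (a*t) - 1) * cos σ * sin θ)) * hpy3
  have H1 : HasDerivAt (fun s => geo σ a θ s 1)
        (deriv (fun v => Ham σ (geo σ a θ t) (Function.update (pGeo σ a θ t) 1 v))
          (pGeo σ a θ t 1)) t ∧
      HasDerivAt (fun s => pGeo σ a θ s 1)
        (-(deriv (fun v => Ham σ (Function.update (geo σ a θ t) 1 v) (pGeo σ a θ t))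
          (geo σ a θ t 1))) t := by
    constructor
    · rw [show (fun v => Ham σ (geo σ a θ t) (Function.update (pGeo σ a θ t) 1 v))
          = (fun v => (1/2) * ((pGeo σ a θ t 0)^2 + (xGeo σ a θ t * cos σ * a)^2
              + (xGeo σ a θ t)^2 * sin σ^2 * a^2) + (xGeo σ a θ t * cos σ * a) * v
              + (1/2) * v^2) from
        funext fun v => by simp [Ham, geo, pGeo, Function.update]; ring, deriv_quad]
      simp only [geo, pGeo, Matrix.cons_val_one, Matrix.head_cons, Matrix.cons_val_zero]
      refine (hy σ a θ t).congr_deriv ?_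
      simp only [xGeo]; field_simp; ring
    · rw [show (fun v => Ham σ (Function.update (geo σ a θ t) 1 v) (pGeo σ a θ t))
          = (fun v => Ham σ (geo σ a θ t) (pGeo σ a θ t) + 0 * v + 0 * v^2) from
        funext fun v => by simp [Ham, geo, pGeo, Function.update]; try ring, deriv_quad]
      simp only [pGeo, Matrix.cons_val_one, Matrix.head_cons]
      simpa using hasDerivAt_const t (sin θ)
  have H2 : HasDerivAt (fun s => geo σ a θ s 2)
        (deriv (fun v => Ham σ (geo σ a θ t) (Function.update (pGeo σ a θ t) 2 v))
          (pGeo σ a θ t 2)) t ∧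
      HasDerivAt (fun s => pGeo σ a θ s 2)
        (-(deriv (fun v => Ham σ (Function.update (geo σ a θ t) 2 v) (pGeo σ a θ t))
          (geo σ a θ t 2))) t := by
    constructor
    · rw [show (fun v => Ham σ (geo σ a θ t) (Function.update (pGeo σ a θ t) 2 v))
          = (fun v => (1/2) * ((pGeo σ a θ t 0)^2 + sin θ^2)
              + (sin θ * xGeo σ a θ t * cos σ) * v
              + ((1/2) * ((xGeo σ a θ t)^2 * cos σ^2 + (xGeo σ a θ t)^2 * sin σ^2)) * v^2) from
        funext fun v => by simp [Ham, geo, pGeo, Function.update]; ring, deriv_quad]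
      simp only [geo, pGeo, Matrix.cons_val_two, Matrix.tail_cons, Matrix.head_cons]
      refine (hz σ a θ t).congr_deriv ?_
      rw [show (2:ℝ)*a*t = 2*(a*t) from mul_assoc 2 a t, cos_two_mul (a*t),
        sin_two_mul θ, cos_two_mul θ, sin_sq σ]
      simp only [xGeo]
      have hpy1 := sin_sq_add_cos_sq (a*t)
      have hpy2 := sin_sq_add_cos_sq θ
      field_simp
      linear_combination (-8*cos θ^2) * hpy1
        + (8*cos (a*t)*cos σ^2 - 8*cos (a*t)^2*cos σ^2) * hpy2
    · rw [show (fun v => Ham σ (Function.update (geo σ a θ t) 2 v) (pGeo σ a θ t))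
          = (fun v => Ham σ (geo σ a θ t) (pGeo σ a θ t) + 0 * v + 0 * v^2) from
        funext fun v => by simp [Ham, geo, pGeo, Function.update]; try ring, deriv_quad]
      simp only [pGeo, Matrix.cons_val_two, Matrix.tail_cons, Matrix.head_cons]
      simpa using hasDerivAt_const t a
  fin_cases i
  exacts [H0, H1, H2]
end

section
/- For all real σ and u, setting A(u) = u sin²σ (u cos u − sin u), C(u) = −u cos σ sin²σ (2 cos u + u sin u − 2), and B(u) = 4(cos u − 1) cos²σ + (u/2)(2u cos u sin²σ + 3 cos(2σ) sin u + sin u), one has the identity B(u)² − A(u)² − C(u)² = 64 cos²σ · sin(u/2) · ((u/2) cos(u/2) − sin(u/2)) · (sin(u/2) cos²σ + (u/2) cos(u/2) sin²σ) · ((u/2) cos(u/2) − sin(u/2) − (u/2)² sin(u/2) sin²σ). -/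
open Real

/-- The trigonometric identity
`B² − A² − C² = 64 cos²σ sin(u/2) ((u/2)cos(u/2) − sin(u/2))
  (sin(u/2)cos²σ + (u/2)cos(u/2)sin²σ) ((u/2)cos(u/2) − sin(u/2) − (u/2)² sin(u/2) sin²σ)`
for the coefficients `A, B, C` of the Jacobian of the exponential map of the
type-1 nilpotent 3-ARS, written as functions of `u = at`. -/
theorem stmt4 (σ u : ℝ) :
    (4 * (cos u - 1) * cos σ ^ 2
        + (u / 2) * (2 * u * cos u * sin σ ^ 2 + 3 * cos (2 * σ) * sin u + sin u)) ^ 2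
      - (u * sin σ ^ 2 * (u * cos u - sin u)) ^ 2
      - (-(u * cos σ * sin σ ^ 2 * (2 * cos u + u * sin u - 2))) ^ 2 =
    64 * cos σ ^ 2 * sin (u / 2)
      * ((u / 2) * cos (u / 2) - sin (u / 2))
      * (sin (u / 2) * cos σ ^ 2 + (u / 2) * cos (u / 2) * sin σ ^ 2)
      * ((u / 2) * cos (u / 2) - sin (u / 2) - (u / 2) ^ 2 * sin (u / 2) * sin σ ^ 2) := by
  have hc : cos u = 1 - 2 * sin (u / 2) ^ 2 := by
    have h := cos_two_mul' (u / 2)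
    rw [show 2 * (u / 2) = u by ring] at h
    have h2 := sin_sq_add_cos_sq (u / 2); linarith
  have hs : sin u = 2 * sin (u / 2) * cos (u / 2) := by
    have h := sin_two_mul (u / 2)
    rw [show 2 * (u / 2) = u by ring] at h
    linarith
  have h2σ : cos (2 * σ) = 1 - 2 * sin σ ^ 2 := by
    have h := cos_two_mul' σ
    have h2 := sin_sq_add_cos_sq σ; linarith
  rw [hc, hs, h2σ]
  linear_combination
    (16*u^2*sin (u/2)^2 - 16*u^2*sin (u/2)^2*cos σ^4 - 48*u^2*sin (u/2)^2*sin σ^2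
      + 32*u^2*sin (u/2)^2*sin σ^2*cos σ^2 + 32*u^2*sin (u/2)^2*sin σ^4
      - 8*u^3*sin (u/2)*cos (u/2)*sin σ^2*cos σ^2) * (sin_sq_add_cos_sq (u/2))
    + (64*u*sin (u/2)^3*cos (u/2)*cos σ^2 - 16*u^2*sin (u/2)^2 - 16*u^2*sin (u/2)^2*cos σ^2
      + 32*u^2*sin (u/2)^2*sin σ^2 + 16*u^2*sin (u/2)^4 + 16*u^2*sin (u/2)^4*cos σ^2
      - 32*u^2*sin (u/2)^4*sin σ^2 - 16*u^2*sin (u/2)^4*sin σ^2*cos σ^2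
      - 8*u^3*sin (u/2)*cos (u/2)*sin σ^2 + 16*u^3*sin (u/2)^3*cos (u/2)*sin σ^2
      + 8*u^3*sin (u/2)^3*cos (u/2)*sin σ^2*cos σ^2) * (sin_sq_add_cos_sq σ)
end

section
/- For every σ ∈ [0, π/2], there exists a smallest positive solution τ of the equation sin τ cos²σ + τ cos τ sin²σ = 0, and it satisfies π/2 ≤ τ ≤ π; in particular sin s cos²σ + s cos s sin²σ > 0 for every s ∈ (0, τ). -/
open Real

private lemma stmt6_aux (σ : ℝ) :
    ∀ s ∈ Set.Ioo (0 : ℝ) (π / 2),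
      0 < Real.sin s * Real.cos σ ^ 2 + s * Real.cos s * Real.sin σ ^ 2 := by
  intro s hs
  have hπ := Real.pi_pos
  have hsin : 0 < Real.sin s := Real.sin_pos_of_pos_of_lt_pi hs.1 (by linarith [hs.2])
  have hcos : 0 < Real.cos s :=
    Real.cos_pos_of_mem_Ioo ⟨by linarith [hs.1], hs.2⟩
  have hb : 0 < s * Real.cos s := mul_pos hs.1 hcos
  have hids : Real.sin σ ^ 2 + Real.cos σ ^ 2 = 1 := Real.sin_sq_add_cos_sq σ
  have h1 : (0:ℝ) ≤ Real.cos σ ^ 2 := sq_nonneg _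
  have h2 : (0:ℝ) ≤ Real.sin σ ^ 2 := sq_nonneg _
  rcases le_total (Real.sin s) (s * Real.cos s) with h | h <;> nlinarith

/-- For every `σ ∈ [0,π/2]` there exists a smallest positive solution `τ` of
`sin τ cos²σ + τ cos τ sin²σ = 0`; it lies in `[π/2, π]`, and
`sin s cos²σ + s cos s sin²σ > 0` for every `s ∈ (0,τ)`. -/
theorem stmt6 (σ : ℝ) (hσ : σ ∈ Set.Icc 0 (π / 2)) :
    ∃ τ : ℝ, IsLeast {s : ℝ | 0 < s ∧ sin s * cos σ ^ 2 + s * cos s * sin σ ^ 2 = 0} τ ∧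
      π / 2 ≤ τ ∧ τ ≤ π ∧
      ∀ s ∈ Set.Ioo (0 : ℝ) τ, 0 < sin s * cos σ ^ 2 + s * cos s * sin σ ^ 2 := by
  have hπ := Real.pi_pos
  set f : ℝ → ℝ := fun s => Real.sin s * Real.cos σ ^ 2 + s * Real.cos s * Real.sin σ ^ 2
    with hf
  have hcont : Continuous f := by fun_prop
  have hfa : f (π / 2) = Real.cos σ ^ 2 := by
    simp [hf, Real.sin_pi_div_two, Real.cos_pi_div_two]
  have hfb : f π = -(π * Real.sin σ ^ 2) := by
    simp [hf, Real.sin_pi, Real.cos_pi]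
  have hab : π / 2 ≤ π := by linarith
  -- the zero set within [π/2, π]
  set S : Set ℝ := Set.Icc (π / 2) π ∩ f ⁻¹' {0} with hS
  have hSclosed : IsClosed S := isClosed_Icc.inter (isClosed_singleton.preimage hcont)
  have hSne : S.Nonempty := by
    have hmem : (0:ℝ) ∈ Set.Icc (f π) (f (π / 2)) := by
      constructor
      · rw [hfb]; nlinarith [sq_nonneg (Real.sin σ)]
      · rw [hfa]; positivity
    obtain ⟨t, ht, hft⟩ := intermediate_value_Icc' hab hcont.continuousOn hmem
    exact ⟨t, ht, by simpa using hft⟩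
  have hSbdd : BddBelow S := ⟨π / 2, fun x hx => hx.1.1⟩
  set τ : ℝ := sInf S with hτ
  have hτS : τ ∈ S := hSclosed.csInf_mem hSne hSbdd
  have hτlb : π / 2 ≤ τ := hτS.1.1
  have hτub : τ ≤ π := hτS.1.2
  have hτzero : f τ = 0 := hτS.2
  have hτpos : 0 < τ := lt_of_lt_of_le (by linarith) hτlb
  -- positivity on [π/2, τ)
  have hpos2 : ∀ s ∈ Set.Ico (π / 2) τ, 0 < f s := by
    intro s hs
    have hslt : s < τ := hs.2
    have hsπ : s ≤ π := le_trans hslt.le hτub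
    have hne : ∀ t ∈ Set.Icc (π / 2) s, f t ≠ 0 := by
      intro t ht hft
      have : t ∈ S := ⟨⟨ht.1, le_trans ht.2 hsπ⟩, hft⟩
      have : τ ≤ t := csInf_le hSbdd this
      linarith [ht.2]
    have hfa' : 0 < f (π / 2) := by
      rcases lt_or_eq_of_le (sq_nonneg (Real.cos σ)) with h | h
      · rw [hfa]; exact h
      · exact absurd (hfa.trans h.symm) (hne (π / 2) ⟨le_refl _, hs.1⟩)
    by_contra hle
    push_neg at hle
    have hflt : f s < 0 := lt_of_le_of_ne hle (hne s ⟨hs.1, le_refl _⟩)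
    have hmem : (0:ℝ) ∈ Set.Icc (f s) (f (π / 2)) := ⟨hflt.le, hfa'.le⟩
    obtain ⟨t, ht, hft⟩ := intermediate_value_Icc' hs.1 hcont.continuousOn hmem
    exact hne t ht hft
  have hposAll : ∀ s ∈ Set.Ioo (0 : ℝ) τ, 0 < f s := by
    intro s hs
    rcases lt_or_ge s (π / 2) with h | h
    · exact stmt6_aux σ s ⟨hs.1, h⟩
    · exact hpos2 s ⟨h, hs.2⟩
  refine ⟨τ, ⟨⟨hτpos, hτzero⟩, ?_⟩, hτlb, hτub, hposAll⟩
  intro s hs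
  by_contra hlt
  push_neg at hlt
  exact (hposAll s ⟨hs.1, hlt⟩).ne' hs.2
end

section
/- Let σ ∈ [0, π/2) (so cos σ ≠ 0) and let τ be the smallest positive solution of sin τ cos²σ + τ cos τ sin²σ = 0. Then for every a ≠ 0 and θ ∈ ℝ: (i) Jac(a,θ,t) ≠ 0 for every t with 0 < t < 2τ/|a|; (ii) there exists t ∈ [2τ/|a|, 2π/|a|] with Jac(a,θ,t) = 0. In particular the first conjugate time of the geodesic γ(a,θ,·) lies in the interval [2τ/|a|, 2π/|a|]. -/
open Real

/-- `Jac(a,θ,t)`: the determinant of the 3×3 matrix whose columns are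
`∂γ/∂a`, `∂γ/∂θ`, `∂γ/∂t` evaluated at `(a,θ,t)`. -/
noncomputable def Jac (σ a θ t : ℝ) : ℝ :=
  Matrix.det
    !![deriv (fun a' => xGeo σ a' θ t) a, deriv (fun θ' => xGeo σ a θ' t) θ,
        deriv (fun t' => xGeo σ a θ t') t;
      deriv (fun a' => yGeo σ a' θ t) a, deriv (fun θ' => yGeo σ a θ' t) θ,
        deriv (fun t' => yGeo σ a θ t') t;
      deriv (fun a' => zGeo σ a' θ t) a, deriv (fun θ' => zGeo σ a θ' t) θ,
        deriv (fun t' => zGeo σ a θ t') t]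

noncomputable def Dfun (v : ℝ) : ℝ := sin v - v * cos v

noncomputable def Lfun (σ v : ℝ) : ℝ := sin v * cos σ ^ 2 + v * cos v * sin σ ^ 2

noncomputable def Qf (σ v s c : ℝ) : ℝ :=
  cos σ ^ 2 * sin v * Dfun v
    + (Dfun v * Lfun σ v + sin σ ^ 2 * v ^ 2 * sin v ^ 2 - cos σ ^ 2 * sin v * Dfun v) * c ^ 2
    - 2 * cos σ * sin σ ^ 2 * v * sin v * Dfun v * s * c

lemma hd_x_a (σ θ t a : ℝ) (ha : a ≠ 0) :
    deriv (fun a' => xGeo σ a' θ t) a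
      = (1/a) * t * (cos θ * cos (a*t) - sin θ * cos σ * sin (a*t))
        - (1/a)^2 * (cos θ * sin (a*t) + (cos (a*t) - 1) * cos σ * sin θ) := by
  have hS : HasDerivAt (fun a' : ℝ => sin (a'*t)) (cos (a*t) * t) a :=
    (hasDerivAt_mul_const t).sin
  have hC : HasDerivAt (fun a' : ℝ => cos (a'*t)) (-sin (a*t) * t) a :=
    (hasDerivAt_mul_const t).cos
  have hInv : HasDerivAt (fun a' : ℝ => 1/a') ((0 * a - 1 * 1)/a^2) a :=
    (hasDerivAt_const a (1:ℝ)).div (hasDerivAt_id' a) ha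
  have h : HasDerivAt (fun a' => xGeo σ a' θ t)
      ((1/a) * t * (cos θ * cos (a*t) - sin θ * cos σ * sin (a*t))
        - (1/a)^2 * (cos θ * sin (a*t) + (cos (a*t) - 1) * cos σ * sin θ)) a :=
    (hInv.mul ((hS.const_mul (cos θ)).add
      (((hC.sub_const 1).mul_const (cos σ)).mul_const (sin θ)))).congr_deriv (by
        simp only [Pi.add_apply, Pi.sub_apply, Pi.mul_apply]; field_simp; ring)
  exact h.deriv

lemma hd_x_θ (σ θ t a : ℝ) :
    deriv (fun θ' => xGeo σ a θ' t) θ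
      = (1/a) * ((cos (a*t) - 1) * cos σ * cos θ - sin (a*t) * sin θ) := by
  have h : HasDerivAt (fun θ' => xGeo σ a θ' t)
      ((1/a) * ((cos (a*t) - 1) * cos σ * cos θ - sin (a*t) * sin θ)) θ :=
    ((((hasDerivAt_cos θ).mul_const (sin (a*t))).add
      ((hasDerivAt_sin θ).const_mul ((cos (a*t) - 1) * cos σ))).const_mul (1/a)).congr_deriv
      (by ring)
  exact h.deriv

lemma hd_x_t (σ θ t a : ℝ) (ha : a ≠ 0) :
    deriv (fun t' => xGeo σ a θ t') t
      = cos θ * cos (a*t) - cos σ * sin θ * sin (a*t) := by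
  have h : HasDerivAt (fun t' => xGeo σ a θ t')
      (cos θ * cos (a*t) - cos σ * sin θ * sin (a*t)) t :=
    (((((hasDerivAt_id' t).const_mul a).sin.const_mul (cos θ)).add
      (((((hasDerivAt_id' t).const_mul a).cos.sub_const 1).mul_const (cos σ)).mul_const
        (sin θ))).const_mul (1/a)).congr_deriv (by field_simp; ring)
  exact h.deriv

lemma hd_y_a (σ θ t a : ℝ) (ha : a ≠ 0) :
    deriv (fun a' => yGeo σ a' θ t) a
      = (1/a) * t * ((cos (a*t) - 1) * sin θ * cos σ^2 + sin (a*t) * cos θ * cos σ + sin θ)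
        - (1/a)^2 * ((sin (a*t) - a*t) * sin θ * cos σ^2
            - (cos (a*t) - 1) * cos θ * cos σ + (a*t) * sin θ) := by
  have hS : HasDerivAt (fun a' : ℝ => sin (a'*t)) (cos (a*t) * t) a :=
    (hasDerivAt_mul_const t).sin
  have hC : HasDerivAt (fun a' : ℝ => cos (a'*t)) (-sin (a*t) * t) a :=
    (hasDerivAt_mul_const t).cos
  have hu : HasDerivAt (fun a' : ℝ => a'*t) t a := hasDerivAt_mul_const t
  have hInv : HasDerivAt (fun a' : ℝ => 1/a') ((0 * a - 1 * 1)/a^2) a :=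
    (hasDerivAt_const a (1:ℝ)).div (hasDerivAt_id' a) ha
  have h : HasDerivAt (fun a' => yGeo σ a' θ t)
      ((1/a) * t * ((cos (a*t) - 1) * sin θ * cos σ^2 + sin (a*t) * cos θ * cos σ + sin θ)
        - (1/a)^2 * ((sin (a*t) - a*t) * sin θ * cos σ^2
            - (cos (a*t) - 1) * cos θ * cos σ + (a*t) * sin θ)) a :=
    (hInv.mul (((((hS.sub hu).mul_const (sin θ)).mul_const (cos σ^2)).sub
      (((hC.sub_const 1).mul_const (cos θ)).mul_const (cos σ))).add
        (hu.mul_const (sin θ)))).congr_deriv (by simp only [Pi.add_apply, Pi.sub_apply, Pi.mul_apply]; field_simp; ring)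
  exact h.deriv

lemma hd_y_θ (σ θ t a : ℝ) :
    deriv (fun θ' => yGeo σ a θ' t) θ
      = (1/a) * ((sin (a*t) - a*t) * cos θ * cos σ^2 + (cos (a*t) - 1) * sin θ * cos σ
          + (a*t) * cos θ) := by
  have h : HasDerivAt (fun θ' => yGeo σ a θ' t)
      ((1/a) * ((sin (a*t) - a*t) * cos θ * cos σ^2 + (cos (a*t) - 1) * sin θ * cos σ
          + (a*t) * cos θ)) θ :=
    ((((((hasDerivAt_sin θ).const_mul (sin (a*t) - a*t)).mul_const (cos σ^2)).sub
      (((hasDerivAt_cos θ).const_mul (cos (a*t) - 1)).mul_const (cos σ))).add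
        ((hasDerivAt_sin θ).const_mul (a*t))).const_mul (1/a)).congr_deriv (by ring)
  exact h.deriv

lemma hd_y_t (σ θ t a : ℝ) (ha : a ≠ 0) :
    deriv (fun t' => yGeo σ a θ t') t
      = (cos (a*t) - 1) * sin θ * cos σ^2 + sin (a*t) * cos θ * cos σ + sin θ := by
  have hS : HasDerivAt (fun t' : ℝ => sin (a*t')) (cos (a*t) * (a*1)) t :=
    ((hasDerivAt_id' t).const_mul a).sin
  have hC : HasDerivAt (fun t' : ℝ => cos (a*t')) (-sin (a*t) * (a*1)) t :=
    ((hasDerivAt_id' t).const_mul a).cos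
  have hu : HasDerivAt (fun t' : ℝ => a*t') (a*1) t := (hasDerivAt_id' t).const_mul a
  have h : HasDerivAt (fun t' => yGeo σ a θ t')
      ((cos (a*t) - 1) * sin θ * cos σ^2 + sin (a*t) * cos θ * cos σ + sin θ) t :=
    ((((((hS.sub hu).mul_const (sin θ)).mul_const (cos σ^2)).sub
      (((hC.sub_const 1).mul_const (cos θ)).mul_const (cos σ))).add
        (hu.mul_const (sin θ))).const_mul (1/a)).congr_deriv (by field_simp; ring)
  exact h.deriv

lemma hd_z_a (σ θ t a : ℝ) (ha : a ≠ 0) :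
    deriv (fun a' => zGeo σ a' θ t) a
      = -(1/a)^3 * (1/4) * (4 * sin (2*θ) * cos σ * cos (a*t) * (1 - cos (a*t))
          + cos (2*θ) * (2 * (a*t) * sin σ^2 - sin (2*(a*t)) * (1 + cos σ^2)
            + 4 * sin (a*t) * cos σ^2)
          + 2 * (a*t) * (1 + cos σ^2) - sin (2*(a*t)) * sin σ^2 - 4 * sin (a*t) * cos σ^2)
        + (1/a)^2 * (1/8) * t * (4 * sin (2*θ) * cos σ * sin (a*t) * (2 * cos (a*t) - 1)
          + cos (2*θ) * (2 * sin σ^2 - 2 * cos (2*(a*t)) * (1 + cos σ^2)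
            + 4 * cos (a*t) * cos σ^2)
          + 2 * (1 + cos σ^2) - 2 * cos (2*(a*t)) * sin σ^2 - 4 * cos (a*t) * cos σ^2) := by
  have hS : HasDerivAt (fun a' : ℝ => sin (a'*t)) (cos (a*t) * t) a :=
    (hasDerivAt_mul_const t).sin
  have hC : HasDerivAt (fun a' : ℝ => cos (a'*t)) (-sin (a*t) * t) a :=
    (hasDerivAt_mul_const t).cos
  have hlin : HasDerivAt (fun a' : ℝ => 2*a'*t) ((2*1)*t) a :=
    ((hasDerivAt_id' a).const_mul 2).mul_const t
  have hS2 : HasDerivAt (fun a' : ℝ => sin (2*a'*t)) (cos (2*a*t) * ((2*1)*t)) a := hlin.sin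
  have h8 : (8 * a ^ 2 : ℝ) ≠ 0 := by positivity
  have hpre : HasDerivAt (fun a' : ℝ => 1/(8*a'^2))
      ((0 * (8*a^2) - 1 * (8 * (2 * a^(2-1))))/(8*a^2)^2) a :=
    (hasDerivAt_const a (1:ℝ)).div ((hasDerivAt_pow 2 a).const_mul 8) h8
  have T1 := (hC.const_mul (4 * sin (2*θ) * cos σ)).mul ((hasDerivAt_const a (1:ℝ)).sub hC)
  have T2 := (((hlin.mul_const (sin σ^2)).sub (hS2.mul_const (1 + cos σ^2))).add
      ((hS.const_mul 4).mul_const (cos σ^2))).const_mul (cos (2*θ))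
  have hsum := (((T1.add T2).add (hlin.mul_const (1 + cos σ^2))).sub
      (hS2.mul_const (sin σ^2))).sub ((hS.const_mul 4).mul_const (cos σ^2))
  have h : HasDerivAt (fun a' => zGeo σ a' θ t) _ a := hpre.mul hsum
  refine (h.congr_deriv ?_).deriv
  simp only [Pi.add_apply, Pi.sub_apply, Pi.mul_apply]
  field_simp
  ring

lemma hd_z_θ (σ θ t a : ℝ) :
    deriv (fun θ' => zGeo σ a θ' t) θ
      = (1/a)^2 * (1/8) * (8 * cos (2*θ) * cos σ * cos (a*t) * (1 - cos (a*t))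
          - 2 * sin (2*θ) * (2 * (a*t) * sin σ^2 - sin (2*(a*t)) * (1 + cos σ^2)
            + 4 * sin (a*t) * cos σ^2)) := by
  have hs2 : HasDerivAt (fun θ' : ℝ => sin (2*θ')) (cos (2*θ) * (2*1)) θ :=
    ((hasDerivAt_id' θ).const_mul 2).sin
  have hc2 : HasDerivAt (fun θ' : ℝ => cos (2*θ')) (-sin (2*θ) * (2*1)) θ :=
    ((hasDerivAt_id' θ).const_mul 2).cos
  have h : HasDerivAt (fun θ' => zGeo σ a θ' t) _ θ :=
    ((((((((hs2.const_mul 4).mul_const (cos σ)).mul_const (cos (a*t))).mul_const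
      (1 - cos (a*t))).add
      (hc2.mul_const (2 * a * t * sin σ^2 - sin (2*a*t) * (1 + cos σ^2)
        + 4 * sin (a*t) * cos σ^2))).add_const (2 * a * t * (1 + cos σ^2))).sub_const
      (sin (2*a*t) * sin σ^2)).sub_const (4 * sin (a*t) * cos σ^2)).const_mul (1/(8*a^2))
  refine (h.congr_deriv ?_).deriv
  field_simp
  ring

lemma hd_z_t (σ θ t a : ℝ) (ha : a ≠ 0) :
    deriv (fun t' => zGeo σ a θ t') t
      = (1/8) * (1/a) * (4 * sin (2*θ) * cos σ * sin (a*t) * (2 * cos (a*t) - 1)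
          + cos (2*θ) * (2 * sin σ^2 - 2 * cos (2*(a*t)) * (1 + cos σ^2)
            + 4 * cos (a*t) * cos σ^2)
          + 2 * (1 + cos σ^2) - 2 * cos (2*(a*t)) * sin σ^2 - 4 * cos (a*t) * cos σ^2) := by
  have hS : HasDerivAt (fun t' : ℝ => sin (a*t')) (cos (a*t) * (a*1)) t :=
    ((hasDerivAt_id' t).const_mul a).sin
  have hC : HasDerivAt (fun t' : ℝ => cos (a*t')) (-sin (a*t) * (a*1)) t :=
    ((hasDerivAt_id' t).const_mul a).cos
  have hlin : HasDerivAt (fun t' : ℝ => 2*a*t') (2*a*1) t :=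
    (hasDerivAt_id' t).const_mul (2*a)
  have hS2 : HasDerivAt (fun t' : ℝ => sin (2*a*t')) (cos (2*a*t) * (2*a*1)) t := hlin.sin
  have hC2 : HasDerivAt (fun t' : ℝ => cos (2*a*t')) (-sin (2*a*t) * (2*a*1)) t := hlin.cos
  have T1 := (hC.const_mul (4 * sin (2*θ) * cos σ)).mul ((hasDerivAt_const t (1:ℝ)).sub hC)
  have T2 := (((hlin.mul_const (sin σ^2)).sub (hS2.mul_const (1 + cos σ^2))).add
      ((hS.const_mul 4).mul_const (cos σ^2))).const_mul (cos (2*θ))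
  have hsum := (((T1.add T2).add (hlin.mul_const (1 + cos σ^2))).sub
      (hS2.mul_const (sin σ^2))).sub ((hS.const_mul 4).mul_const (cos σ^2))
  have h : HasDerivAt (fun t' => zGeo σ a θ t') _ t := hsum.const_mul (1/(8*a^2))
  refine (h.congr_deriv ?_).deriv
  simp only [Pi.add_apply, Pi.sub_apply, Pi.mul_apply]
  field_simp
  ring

set_option maxRecDepth 100000 in
set_option maxHeartbeats 2000000 in
lemma jac_closed (σ θ : ℝ) (a : ℝ) (ha : a ≠ 0) (t : ℝ) :
    Jac σ a θ t = -4 * (1/a)^4 * Qf σ (a*t/2) (sin θ) (cos θ) := by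
  have hv1 := sin_sq_add_cos_sq (a*t/2)
  have hv2 := sin_sq_add_cos_sq θ
  have hv3 := sin_sq_add_cos_sq σ
  have hinv : a * (1/a) = 1 := by field_simp
  rw [Jac, Matrix.det_fin_three]
  simp only [Fin.isValue, Matrix.of_apply, Matrix.cons_val', Matrix.cons_val_zero,
    Matrix.cons_val_one, Matrix.head_cons, Matrix.empty_val', Matrix.cons_val_fin_one,
    Matrix.cons_val_two, Nat.succ_eq_add_one, Nat.reduceAdd, Matrix.tail_cons,
    Matrix.head_fin_const]
  rw [hd_x_a σ θ t a ha, hd_x_θ σ θ t a, hd_x_t σ θ t a ha, hd_y_a σ θ t a ha, hd_y_θ σ θ t a,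
    hd_y_t σ θ t a ha, hd_z_a σ θ t a ha, hd_z_θ σ θ t a, hd_z_t σ θ t a ha]
  simp only [Qf, Dfun, Lfun]
  rw [sin_two_mul (a*t), cos_two_mul (a*t), sin_two_mul θ, cos_two_mul θ]
  set v := a*t/2 with hv
  rw [show a*t = 2*v from by rw [hv]; ring]
  rw [sin_two_mul v, cos_two_mul v]
  rw [show t = 2*v*(1/a) from by rw [hv]; field_simp]
  linear_combination (norm := ring1) (0:ℝ) * hinv + (4*((1/a))^4*(cos σ)^2 + 4*((1/a))^4*(cos v)^2*(cos θ)^2*(cos σ)^2 + 4*((1/a))^4*(cos v)^2*(cos θ)^2*(cos σ)^2*(sin σ)^2 + -16*((1/a))^4*(cos v)^2*(cos θ)^2*(cos σ)^4 + -10*((1/a))^4*(cos v)^2*(cos θ)^4*(cos σ)^2 + -2*((1/a))^4*(cos v)^2*(cos θ)^4*(cos σ)^2*(sin σ)^2 + 18*((1/a))^4*(cos v)^2*(cos θ)^4*(cos σ)^4 + -2*((1/a))^4*(cos v)^2*(sin θ)^2 + 2*((1/a))^4*(cos v)^2*(sin θ)^2*(sin σ)^2 + -12*((1/a))^4*(cos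 v)^2*(sin θ)^2*(cos σ)^2 + 2*((1/a))^4*(cos v)^2*(sin θ)^2*(cos σ)^2*(sin σ)^2 + 2*((1/a))^4*(cos v)^2*(sin θ)^2*(cos σ)^4 + -10*((1/a))^4*(cos v)^2*(sin θ)^2*(cos θ)^2*(cos σ)^2 + -2*((1/a))^4*(cos v)^2*(sin θ)^2*(cos θ)^2*(cos σ)^2*(sin σ)^2 + 18*((1/a))^4*(cos v)^2*(sin θ)^2*(cos θ)^2*(cos σ)^4 + -12*((1/a))^4*(cos v)^4*(cos θ)^2*(cos σ)^2 + -12*((1/a))^4*(cos v)^4*(cos θ)^2*(cos σ)^2*(sin σ)^2 + 20*((1/a))^4*(cos v)^4*(cos θ)^2*(cos σ)^4 + 24*((1/a))^4*(cos v)^4*(cos θ)^4*(cos σ)^2 + -32*((1/a))^4*(cos v)^4*(cos θ)^4*(cos σ)^4 + 4*((1/a))^4*(cos v)^4*(sin θ)^2 + -4*((1/a))^4*(cos v)^4*(sin θ)^2*(sin σ)^2 + 12*((1/a))^4*(cos v)^4*(sin θ)^2*(cos σ)^2 + -8*((1/a))^4*(cos v)^4*(sin θ)^2*(cos σ)^2*(sin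 σ)^2 + -8*((1/a))^4*(cos v)^4*(sin θ)^2*(cos σ)^4 + 24*((1/a))^4*(cos v)^4*(sin θ)^2*(cos θ)^2*(cos σ)^2 + -32*((1/a))^4*(cos v)^4*(sin θ)^2*(cos θ)^2*(cos σ)^4 + 8*((1/a))^4*(cos v)^6*(cos θ)^2*(cos σ)^2 + 8*((1/a))^4*(cos v)^6*(cos θ)^2*(cos σ)^2*(sin σ)^2 + -8*((1/a))^4*(cos v)^6*(cos θ)^2*(cos σ)^4 + -16*((1/a))^4*(cos v)^6*(cos θ)^4*(cos σ)^2 + 16*((1/a))^4*(cos v)^6*(cos θ)^4*(cos σ)^4 + -8*((1/a))^4*(cos v)^6*(sin θ)^2*(cos σ)^2 + 8*((1/a))^4*(cos v)^6*(sin θ)^2*(cos σ)^2*(sin σ)^2 + 8*((1/a))^4*(cos v)^6*(sin θ)^2*(cos σ)^4 + -16*((1/a))^4*(cos v)^6*(sin θ)^2*(cos θ)^2*(cos σ)^2 + 16*((1/a))^4*(cos v)^6*(sin θ)^2*(cos θ)^2*(cos σ)^4 + -4*((1/a))^4*(sin v)*(cos v)^3*(sin θ)*(cos θ)*(cos σ)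 + 4*((1/a))^4*(sin v)*(cos v)^3*(sin θ)*(cos θ)*(cos σ)*(sin σ)^2 + -16*((1/a))^4*(sin v)*(cos v)^3*(sin θ)*(cos θ)*(cos σ)^3 + -4*((1/a))^4*(sin v)*(cos v)^3*(sin θ)*(cos θ)*(cos σ)^3*(sin σ)^2 + 20*((1/a))^4*(sin v)*(cos v)^3*(sin θ)*(cos θ)*(cos σ)^5 + 16*((1/a))^4*(sin v)*(cos v)^3*(sin θ)*(cos θ)^3*(cos σ)^3 + -24*((1/a))^4*(sin v)*(cos v)^3*(sin θ)*(cos θ)^3*(cos σ)^5 + 16*((1/a))^4*(sin v)*(cos v)^3*(sin θ)^3*(cos θ)*(cos σ)^3 + -24*((1/a))^4*(sin v)*(cos v)^3*(sin θ)^3*(cos θ)*(cos σ)^5 + 8*((1/a))^4*(sin v)*(cos v)^5*(sin θ)*(cos θ)*(cos σ) + -8*((1/a))^4*(sin v)*(cos v)^5*(sin θ)*(cos θ)*(cos σ)*(sin σ)^2 + 8*((1/a))^4*(sin v)*(cos v)^5*(sin θ)*(cos θ)*(cos σ)^3*(sin σ)^2 + -8*((1/a))^4*(sin v)*(cos v)^5*(sin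 θ)*(cos θ)*(cos σ)^5 + -16*((1/a))^4*(sin v)*(cos v)^5*(sin θ)*(cos θ)^3*(cos σ)^3 + 16*((1/a))^4*(sin v)*(cos v)^5*(sin θ)*(cos θ)^3*(cos σ)^5 + -16*((1/a))^4*(sin v)*(cos v)^5*(sin θ)^3*(cos θ)*(cos σ)^3 + 16*((1/a))^4*(sin v)*(cos v)^5*(sin θ)^3*(cos θ)*(cos σ)^5 + -8*((1/a))^4*(v)*(sin θ)*(cos θ)*(cos σ)*(sin σ)^2 + 8*((1/a))^4*(v)*(cos v)^2*(sin θ)*(cos θ)*(cos σ) + -8*((1/a))^4*(v)*(cos v)^2*(sin θ)*(cos θ)*(cos σ)*(sin σ)^2 + 16*((1/a))^4*(v)*(cos v)^2*(sin θ)*(cos θ)*(cos σ)^3 + 8*((1/a))^4*(v)*(cos v)^2*(sin θ)*(cos θ)*(cos σ)^3*(sin σ)^2 + -24*((1/a))^4*(v)*(cos v)^2*(sin θ)*(cos θ)*(cos σ)^5 + 16*((1/a))^4*(v)*(cos v)^2*(sin θ)*(cos θ)^3*(cos σ) + -40*((1/a))^4*(v)*(cos v)^2*(sin θ)*(cos θ)^3*(cos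 σ)^3 + -8*((1/a))^4*(v)*(cos v)^2*(sin θ)*(cos θ)^3*(cos σ)^3*(sin σ)^2 + 24*((1/a))^4*(v)*(cos v)^2*(sin θ)*(cos θ)^3*(cos σ)^5 + 16*((1/a))^4*(v)*(cos v)^2*(sin θ)^3*(cos θ)*(cos σ) + -40*((1/a))^4*(v)*(cos v)^2*(sin θ)^3*(cos θ)*(cos σ)^3 + -8*((1/a))^4*(v)*(cos v)^2*(sin θ)^3*(cos θ)*(cos σ)^3*(sin σ)^2 + 24*((1/a))^4*(v)*(cos v)^2*(sin θ)^3*(cos θ)*(cos σ)^5 + -8*((1/a))^4*(v)*(cos v)^4*(sin θ)*(cos θ)*(cos σ) + 8*((1/a))^4*(v)*(cos v)^4*(sin θ)*(cos θ)*(cos σ)*(sin σ)^2 + -8*((1/a))^4*(v)*(cos v)^4*(sin θ)*(cos θ)*(cos σ)^3*(sin σ)^2 + 8*((1/a))^4*(v)*(cos v)^4*(sin θ)*(cos θ)*(cos σ)^5 + -16*((1/a))^4*(v)*(cos v)^4*(sin θ)*(cos θ)^3*(cos σ) + 32*((1/a))^4*(v)*(cos v)^4*(sin θ)*(cos θ)^3*(cos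 σ)^3 + -16*((1/a))^4*(v)*(cos v)^4*(sin θ)*(cos θ)^3*(cos σ)^5 + -16*((1/a))^4*(v)*(cos v)^4*(sin θ)^3*(cos θ)*(cos σ) + 32*((1/a))^4*(v)*(cos v)^4*(sin θ)^3*(cos θ)*(cos σ)^3 + -16*((1/a))^4*(v)*(cos v)^4*(sin θ)^3*(cos θ)*(cos σ)^5 + 4*((1/a))^4*(v)^2*(cos θ)^2*(sin σ)^2) * hv1 + (-6*((1/a))^4*(cos σ)^2 + 2*((1/a))^4*(cos σ)^2*(sin σ)^2 + 2*((1/a))^4*(cos σ)^4 + -6*((1/a))^4*(cos θ)^2*(cos σ)^2 + -2*((1/a))^4*(cos θ)^2*(cos σ)^2*(sin σ)^2 + 6*((1/a))^4*(cos θ)^2*(cos σ)^4 + -2*((1/a))^4*(cos v)^2 + 2*((1/a))^4*(cos v)^2*(sin σ)^2 + 16*((1/a))^4*(cos v)^2*(cos σ)^2 + -10*((1/a))^4*(cos v)^2*(cos σ)^2*(sin σ)^2 + -10*((1/a))^4*(cos v)^2*(cos σ)^4 + 18*((1/a))^4*(cos v)^2*(cos θ)^2*(cos σ)^2 + 2*((1/a))^4*(cos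 v)^2*(cos θ)^2*(cos σ)^2*(sin σ)^2 + -18*((1/a))^4*(cos v)^2*(cos θ)^2*(cos σ)^4 + 6*((1/a))^4*(cos v)^4 + -6*((1/a))^4*(cos v)^4*(sin σ)^2 + -22*((1/a))^4*(cos v)^4*(cos σ)^2 + 16*((1/a))^4*(cos v)^4*(cos σ)^2*(sin σ)^2 + 16*((1/a))^4*(cos v)^4*(cos σ)^4 + -20*((1/a))^4*(cos v)^4*(cos θ)^2*(cos σ)^2 + 20*((1/a))^4*(cos v)^4*(cos θ)^2*(cos σ)^4 + -4*((1/a))^4*(cos v)^6 + 4*((1/a))^4*(cos v)^6*(sin σ)^2 + 12*((1/a))^4*(cos v)^6*(cos σ)^2 + -8*((1/a))^4*(cos v)^6*(cos σ)^2*(sin σ)^2 + -8*((1/a))^4*(cos v)^6*(cos σ)^4 + 8*((1/a))^4*(cos v)^6*(cos θ)^2*(cos σ)^2 + -8*((1/a))^4*(cos v)^6*(cos θ)^2*(cos σ)^4 + -4*((1/a))^4*(sin v)*(cos v)*(sin θ)*(cos θ)*(cos σ) + 28*((1/a))^4*(sin v)*(cos v)*(sin θ)*(cos θ)*(cos σ)^3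 + -24*((1/a))^4*(sin v)*(cos v)*(sin θ)*(cos θ)*(cos σ)^5 + 12*((1/a))^4*(sin v)*(cos v)^3*(sin θ)*(cos θ)*(cos σ) + -52*((1/a))^4*(sin v)*(cos v)^3*(sin θ)*(cos θ)*(cos σ)^3 + 40*((1/a))^4*(sin v)*(cos v)^3*(sin θ)*(cos θ)*(cos σ)^5 + -8*((1/a))^4*(sin v)*(cos v)^5*(sin θ)*(cos θ)*(cos σ) + 24*((1/a))^4*(sin v)*(cos v)^5*(sin θ)*(cos θ)*(cos σ)^3 + -16*((1/a))^4*(sin v)*(cos v)^5*(sin θ)*(cos θ)*(cos σ)^5 + 4*((1/a))^4*(v)*(sin θ)*(cos θ)*(cos σ)*(sin σ)^2 + -8*((1/a))^4*(v)*(sin θ)*(cos θ)*(cos σ)^3*(sin σ)^2 + 16*((1/a))^4*(v)*(cos v)^2*(sin θ)*(cos θ)*(cos σ) + -4*((1/a))^4*(v)*(cos v)^2*(sin θ)*(cos θ)*(cos σ)*(sin σ)^2 + -40*((1/a))^4*(v)*(cos v)^2*(sin θ)*(cos θ)*(cos σ)^3 + 8*((1/a))^4*(v)*(cos v)^2*(sin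 θ)*(cos θ)*(cos σ)^3*(sin σ)^2 + 24*((1/a))^4*(v)*(cos v)^2*(sin θ)*(cos θ)*(cos σ)^5 + -32*((1/a))^4*(v)*(cos v)^4*(sin θ)*(cos θ)*(cos σ) + 72*((1/a))^4*(v)*(cos v)^4*(sin θ)*(cos θ)*(cos σ)^3 + -40*((1/a))^4*(v)*(cos v)^4*(sin θ)*(cos θ)*(cos σ)^5 + 16*((1/a))^4*(v)*(cos v)^6*(sin θ)*(cos θ)*(cos σ) + -32*((1/a))^4*(v)*(cos v)^6*(sin θ)*(cos θ)*(cos σ)^3 + 16*((1/a))^4*(v)*(cos v)^6*(sin θ)*(cos θ)*(cos σ)^5 + 6*((1/a))^4*(v)*(sin v)*(cos v)*(cos σ)^2 + -2*((1/a))^4*(v)*(sin v)*(cos v)*(cos σ)^2*(sin σ)^2 + -2*((1/a))^4*(v)*(sin v)*(cos v)*(cos σ)^4 + -2*((1/a))^4*(v)*(sin v)*(cos v)*(cos θ)^2 + -2*((1/a))^4*(v)*(sin v)*(cos v)*(cos θ)^2*(sin σ)^2 + -4*((1/a))^4*(v)*(sin v)*(cos v)*(cos θ)^2*(cos σ)^2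 + 6*((1/a))^4*(v)*(sin v)*(cos v)*(cos θ)^2*(cos σ)^2*(sin σ)^2 + 6*((1/a))^4*(v)*(sin v)*(cos v)*(cos θ)^2*(cos σ)^4 + 8*((1/a))^4*(v)*(sin v)*(cos v)^3 + -8*((1/a))^4*(v)*(sin v)*(cos v)^3*(sin σ)^2 + -16*((1/a))^4*(v)*(sin v)*(cos v)^3*(cos σ)^2 + 8*((1/a))^4*(v)*(sin v)*(cos v)^3*(cos σ)^2*(sin σ)^2 + 8*((1/a))^4*(v)*(sin v)*(cos v)^3*(cos σ)^4 + 8*((1/a))^4*(v)*(sin v)*(cos v)^3*(cos θ)^2*(cos σ)^2 + -8*((1/a))^4*(v)*(sin v)*(cos v)^3*(cos θ)^2*(cos σ)^4 + -8*((1/a))^4*(v)*(sin v)*(cos v)^5 + 8*((1/a))^4*(v)*(sin v)*(cos v)^5*(sin σ)^2 + 16*((1/a))^4*(v)*(sin v)*(cos v)^5*(cos σ)^2 + -8*((1/a))^4*(v)*(sin v)*(cos v)^5*(cos σ)^2*(sin σ)^2 + -8*((1/a))^4*(v)*(sin v)*(cos v)^5*(cos σ)^4 + -4*((1/a))^4*(v)^2*(cos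 θ)^2*(sin σ)^2 + 4*((1/a))^4*(v)^2*(cos θ)^2*(cos σ)^2*(sin σ)^2 + 8*((1/a))^4*(v)^2*(cos v)^2*(cos θ)^2*(sin σ)^2 + -8*((1/a))^4*(v)^2*(cos v)^2*(cos θ)^2*(cos σ)^2*(sin σ)^2 + -8*((1/a))^4*(v)^2*(sin v)*(cos v)*(sin θ)*(cos θ)*(cos σ)*(sin σ)^2 + 8*((1/a))^4*(v)^2*(sin v)*(cos v)*(sin θ)*(cos θ)*(cos σ)^3*(sin σ)^2) * hv2 + (2*((1/a))^4*(cos σ)^2 + -2*((1/a))^4*(cos θ)^2*(cos σ)^2 + 2*((1/a))^4*(cos v)^2 + -10*((1/a))^4*(cos v)^2*(cos σ)^2 + -2*((1/a))^4*(cos v)^2*(cos θ)^2 + 4*((1/a))^4*(cos v)^2*(cos θ)^2*(cos σ)^2 + -6*((1/a))^4*(cos v)^4 + 16*((1/a))^4*(cos v)^4*(cos σ)^2 + 6*((1/a))^4*(cos v)^4*(cos θ)^2 + -6*((1/a))^4*(cos v)^4*(cos θ)^2*(cos σ)^2 + 4*((1/a))^4*(cos v)^6 + -8*((1/a))^4*(cos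 v)^6*(cos σ)^2 + -4*((1/a))^4*(cos v)^6*(cos θ)^2 + 4*((1/a))^4*(cos v)^6*(cos θ)^2*(cos σ)^2 + 4*((1/a))^4*(sin v)*(cos v)*(sin θ)*(cos θ)*(cos σ) + -4*((1/a))^4*(sin v)*(cos v)*(sin θ)*(cos θ)*(cos σ)^3 + -12*((1/a))^4*(sin v)*(cos v)^3*(sin θ)*(cos θ)*(cos σ) + 12*((1/a))^4*(sin v)*(cos v)^3*(sin θ)*(cos θ)*(cos σ)^3 + 8*((1/a))^4*(sin v)*(cos v)^5*(sin θ)*(cos θ)*(cos σ) + -8*((1/a))^4*(sin v)*(cos v)^5*(sin θ)*(cos θ)*(cos σ)^3 + -8*((1/a))^4*(v)*(sin θ)*(cos θ)*(cos σ) + -4*((1/a))^4*(v)*(sin θ)*(cos θ)*(cos σ)^3 + 4*((1/a))^4*(v)*(cos v)^2*(sin θ)*(cos θ)*(cos σ) + 8*((1/a))^4*(v)*(cos v)^2*(sin θ)*(cos θ)*(cos σ)^3 + 12*((1/a))^4*(v)*(cos v)^4*(sin θ)*(cos θ)*(cos σ) + -12*((1/a))^4*(v)*(cos v)^4*(sin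 θ)*(cos θ)*(cos σ)^3 + -8*((1/a))^4*(v)*(cos v)^6*(sin θ)*(cos θ)*(cos σ) + 8*((1/a))^4*(v)*(cos v)^6*(sin θ)*(cos θ)*(cos σ)^3 + -2*((1/a))^4*(v)*(sin v)*(cos v)*(cos σ)^2 + 2*((1/a))^4*(v)*(sin v)*(cos v)*(cos θ)^2 + 6*((1/a))^4*(v)*(sin v)*(cos v)*(cos θ)^2*(cos σ)^2 + -8*((1/a))^4*(v)*(sin v)*(cos v)^3 + 8*((1/a))^4*(v)*(sin v)*(cos v)^3*(cos σ)^2 + 8*((1/a))^4*(v)*(sin v)*(cos v)^3*(cos θ)^2 + -8*((1/a))^4*(v)*(sin v)*(cos v)^3*(cos θ)^2*(cos σ)^2 + 8*((1/a))^4*(v)*(sin v)*(cos v)^5 + -8*((1/a))^4*(v)*(sin v)*(cos v)^5*(cos σ)^2 + -8*((1/a))^4*(v)*(sin v)*(cos v)^5*(cos θ)^2 + 8*((1/a))^4*(v)*(sin v)*(cos v)^5*(cos θ)^2*(cos σ)^2 + 2*((1/a))^4*(v)^2*(cos θ)^2 + 2*((1/a))^4*(v)^2*(cos θ)^2*(cos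 σ)^2 + -4*((1/a))^4*(v)^2*(cos v)^2*(cos θ)^2 + -4*((1/a))^4*(v)^2*(cos v)^2*(cos θ)^2*(cos σ)^2 + 4*((1/a))^4*(v)^2*(sin v)*(cos v)*(sin θ)*(cos θ)*(cos σ) + 4*((1/a))^4*(v)^2*(sin v)*(cos v)*(sin θ)*(cos θ)*(cos σ)^3) * hv3

lemma Dfun_pos {v : ℝ} (h0 : 0 < v) (hπ : v ≤ π) : 0 < Dfun v := by
  have hmono : StrictMonoOn Dfun (Set.Icc 0 π) := by
    refine strictMonoOn_of_deriv_pos (convex_Icc 0 π) ?_ ?_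
    · have : Continuous Dfun := by unfold Dfun; fun_prop
      exact this.continuousOn
    · intro x hx
      rw [interior_Icc] at hx
      have hD : HasDerivAt Dfun (x * sin x) x := by
        have h := (hasDerivAt_sin x).sub ((hasDerivAt_id' x).mul (hasDerivAt_cos x))
        exact h.congr_deriv (by ring)
      rw [hD.deriv]
      exact mul_pos hx.1 (sin_pos_of_pos_of_lt_pi hx.1 hx.2)
  have := hmono ⟨le_refl 0, pi_pos.le⟩ ⟨h0.le, hπ⟩ h0
  simpa [Dfun] using this

lemma Lfun_cont (σ : ℝ) : Continuous (Lfun σ) := by unfold Lfun; fun_prop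

lemma Lfun_pos_small (σ : ℝ) (hp : 0 < cos σ) {v : ℝ} (h0 : 0 < v) (h2 : v ≤ π/2) :
    0 < Lfun σ v := by
  have hs : 0 < sin v := sin_pos_of_pos_of_lt_pi h0 (lt_of_le_of_lt h2 (by linarith [pi_pos]))
  have hc : 0 ≤ cos v := cos_nonneg_of_mem_Icc ⟨by linarith, h2⟩
  have : 0 < sin v * cos σ ^ 2 := by positivity
  have h2' : 0 ≤ v * cos v * sin σ ^ 2 := by positivity
  unfold Lfun; linarith


lemma Qf_neg_v (σ v s c : ℝ) : Qf σ (-v) s c = Qf σ v (-s) c := by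
  simp only [Qf, Dfun, Lfun, sin_neg, cos_neg]; ring

lemma qf_id (σ v s c : ℝ) (h1 : s^2 + c^2 = 1) :
    (cos σ^2 * sin v * Dfun v) * Qf σ v s c
      = (cos σ^2 * sin v * Dfun v * s - cos σ * sin σ^2 * v * sin v * Dfun v * c)^2
        + cos σ^2 * sin v * Dfun v * (Dfun v + sin σ^2 * v^2 * sin v) * Lfun σ v * c^2 := by
  simp only [Qf, Dfun, Lfun]
  linear_combination (-(cos σ^2*sin v*(sin v - v*cos v))^2) * h1
    + (-(cos σ^2*sin σ^2*v^2*sin v^3*(sin v - v*cos v)*c^2)) * (sin_sq_add_cos_sq σ)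

lemma Lfun_pi (σ : ℝ) : Lfun σ π = -(π * sin σ^2) := by
  simp only [Lfun, Real.sin_pi, Real.cos_pi]; ring

lemma Lfun_pi_div_two (σ : ℝ) : Lfun σ (π/2) = cos σ^2 := by
  simp only [Lfun, Real.sin_pi_div_two, Real.cos_pi_div_two]; ring

lemma tau_le_pi (σ τ : ℝ) (hp : 0 < cos σ)
    (hτ : IsLeast {s : ℝ | 0 < s ∧ sin s * cos σ ^ 2 + s * cos s * sin σ ^ 2 = 0} τ) :
    τ ≤ π := by
  have hsub := intermediate_value_Icc' (by linarith [pi_pos] : π/2 ≤ π)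
    ((Lfun_cont σ).continuousOn (s := Set.Icc (π/2) π))
  have h0mem : (0:ℝ) ∈ Set.Icc (Lfun σ π) (Lfun σ (π/2)) := by
    constructor
    · rw [Lfun_pi]; nlinarith [sq_nonneg (sin σ), pi_pos]
    · rw [Lfun_pi_div_two]; positivity
  obtain ⟨r, hr, hr0⟩ := hsub h0mem
  exact le_trans (hτ.2 ⟨by linarith [hr.1, pi_pos], hr0⟩) hr.2

lemma Lfun_pos (σ τ : ℝ) (hp : 0 < cos σ)
    (hτ : IsLeast {s : ℝ | 0 < s ∧ sin s * cos σ ^ 2 + s * cos s * sin σ ^ 2 = 0} τ)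
    {v : ℝ} (h0 : 0 < v) (hvτ : v < τ) : 0 < Lfun σ v := by
  by_contra hle
  push_neg at hle
  have hv2 : π/2 < v := by
    by_contra h
    push_neg at h
    linarith [Lfun_pos_small σ hp h0 h]
  have hsub := intermediate_value_Icc' (le_of_lt hv2)
    ((Lfun_cont σ).continuousOn (s := Set.Icc (π/2) v))
  have h0mem : (0:ℝ) ∈ Set.Icc (Lfun σ v) (Lfun σ (π/2)) := by
    refine ⟨hle, ?_⟩
    rw [Lfun_pi_div_two]; positivity
  obtain ⟨r, hr, hr0⟩ := hsub h0mem
  have hτr : τ ≤ r := hτ.2 ⟨by linarith [hr.1, pi_pos], hr0⟩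
  linarith [hr.2]

lemma Qf_pos (σ : ℝ) (hp : 0 < cos σ) {v : ℝ} (h0 : 0 < v) (hπ : v ≤ π)
    (hL : 0 < Lfun σ v) (s c : ℝ) (hsc : s^2 + c^2 = 1) : 0 < Qf σ v s c := by
  have hvπ : v < π := by
    rcases lt_or_eq_of_le hπ with h | h
    · exact h
    · exfalso
      rw [h, Lfun_pi] at hL
      nlinarith [sq_nonneg (sin σ), pi_pos]
  have hsv : 0 < sin v := sin_pos_of_pos_of_lt_pi h0 hvπ
  have hD := Dfun_pos h0 hπ
  have hγ : 0 < cos σ^2 * sin v * Dfun v := by positivity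
  have hDq : 0 < Dfun v + sin σ^2 * v^2 * sin v := by
    have h2 : 0 ≤ sin σ^2 * v^2 * sin v := by positivity
    linarith
  have hdet : 0 < cos σ^2 * sin v * Dfun v * (Dfun v + sin σ^2*v^2*sin v) * Lfun σ v :=
    mul_pos (mul_pos hγ hDq) hL
  have hid := qf_id σ v s c hsc
  rcases eq_or_ne c 0 with hc | hc
  · have hQc : Qf σ v s c = cos σ^2 * sin v * Dfun v := by
      rw [hc]; simp only [Qf]; ring
    rw [hQc]; exact hγ
  · have hc2 : 0 < c^2 := by positivity
    have hQγ : 0 < (cos σ^2 * sin v * Dfun v) * Qf σ v s c := by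
      rw [hid]
      nlinarith [sq_nonneg (cos σ^2*sin v*Dfun v*s - cos σ*sin σ^2*v*sin v*Dfun v*c),
        mul_pos hdet hc2]
    by_contra hle
    push_neg at hle
    nlinarith [mul_nonneg hγ.le (neg_nonneg.mpr hle)]

lemma Q_tau_nonneg (σ τ : ℝ) (hp : 0 < cos σ) (hτpos : 0 < τ) (hτπ : τ ≤ π)
    (hLτ : Lfun σ τ = 0) (s c : ℝ) (hsc : s^2 + c^2 = 1) : 0 ≤ Qf σ τ s c := by
  rcases lt_or_eq_of_le hτπ with hlt | heq
  · have hsv : 0 < sin τ := sin_pos_of_pos_of_lt_pi hτpos hlt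
    have hD := Dfun_pos hτpos hτπ
    have hγ : 0 < cos σ^2 * sin τ * Dfun τ := by positivity
    have hid := qf_id σ τ s c hsc
    rw [hLτ] at hid
    by_contra h
    push_neg at h
    nlinarith [sq_nonneg (cos σ^2*sin τ*Dfun τ*s - cos σ*sin σ^2*τ*sin τ*Dfun τ*c),
      mul_pos hγ (neg_pos.mpr h)]
  · have hq2 : sin σ^2 = 0 := by
      rw [heq, Lfun_pi] at hLτ
      nlinarith [pi_pos]
    have : Qf σ τ s c = 0 := by
      rw [heq]
      simp only [Qf, Dfun, Lfun, Real.sin_pi, Real.cos_pi, hq2]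
      ring
    rw [this]

lemma Q_pi_nonpos (σ s c : ℝ) : Qf σ π s c ≤ 0 := by
  have h : Qf σ π s c = -(π^2 * sin σ^2 * c^2) := by
    simp only [Qf, Dfun, Lfun, Real.sin_pi, Real.cos_pi]
    ring
  rw [h]
  have : 0 ≤ π^2 * sin σ^2 * c^2 := by positivity
  linarith

/-- For `σ ∈ [0,π/2)` and `τ` the smallest positive solution of
`sin τ cos²σ + τ cos τ sin²σ = 0`: for every `a ≠ 0` and `θ`,
(i) `Jac(a,θ,t) ≠ 0` for `0 < t < 2τ/|a|`, and
(ii) `Jac(a,θ,t) = 0` for some `t ∈ [2τ/|a|, 2π/|a|]`; i.e. the first conjugate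
time of `γ(a,θ,·)` lies in `[2τ/|a|, 2π/|a|]`. -/
theorem stmt7 (σ τ : ℝ) (hσ : σ ∈ Set.Ico 0 (π / 2))
    (hτ : IsLeast {s : ℝ | 0 < s ∧ sin s * cos σ ^ 2 + s * cos s * sin σ ^ 2 = 0} τ)
    (a θ : ℝ) (ha : a ≠ 0) :
    (∀ t : ℝ, 0 < t → t < 2 * τ / |a| → Jac σ a θ t ≠ 0) ∧
    (∃ t ∈ Set.Icc (2 * τ / |a|) (2 * π / |a|), Jac σ a θ t = 0) := by
  have hp : 0 < cos σ :=
    Real.cos_pos_of_mem_Ioo ⟨by linarith [hσ.1, pi_pos], hσ.2⟩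
  have hτpos : 0 < τ := hτ.1.1
  have hLτ : Lfun σ τ = 0 := hτ.1.2
  have hτπ : τ ≤ π := tau_le_pi σ τ hp hτ
  have habs : 0 < |a| := abs_pos.mpr ha
  have hscθ : sin θ^2 + cos θ^2 = 1 := sin_sq_add_cos_sq θ
  have hscθ' : (-sin θ)^2 + cos θ^2 = 1 := by
    rw [neg_pow]; simpa using hscθ
  have h4 : 0 < (1/a)^4 := by positivity
  constructor
  · intro t ht htlt
    rw [jac_closed σ θ a ha t]
    have hQ : 0 < Qf σ (a*t/2) (sin θ) (cos θ) := by
      rcases lt_or_gt_of_ne ha with hneg | hpos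
      · have habs' : |a| = -a := abs_of_neg hneg
        rw [habs'] at htlt
        have h0 : 0 < (-a)*t/2 := by nlinarith
        have hvτ : (-a)*t/2 < τ := by
          rw [lt_div_iff₀ (by linarith : (0:ℝ) < -a)] at htlt
          nlinarith
        have hrw : a*t/2 = -((-a)*t/2) := by ring
        rw [hrw, Qf_neg_v]
        exact Qf_pos σ hp h0 (by linarith) (Lfun_pos σ τ hp hτ h0 hvτ) _ _ hscθ'
      · have habs' : |a| = a := abs_of_pos hpos
        rw [habs'] at htlt
        have h0 : 0 < a*t/2 := by positivity
        have hvτ : a*t/2 < τ := by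
          rw [lt_div_iff₀ hpos] at htlt
          nlinarith
        exact Qf_pos σ hp h0 (by linarith) (Lfun_pos σ τ hp hτ h0 hvτ) _ _ hscθ
    have : -4*(1/a)^4 * Qf σ (a*t/2) (sin θ) (cos θ) < 0 := by nlinarith
    exact ne_of_lt this
  · have ht12 : 2*τ/|a| ≤ 2*π/|a| := by
      gcongr
    have e1 : Jac σ a θ (2*τ/|a|) ≤ 0 := by
      rw [jac_closed σ θ a ha]
      have hQ : 0 ≤ Qf σ (a*(2*τ/|a|)/2) (sin θ) (cos θ) := by
        rcases lt_or_gt_of_ne ha with hneg | hpos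
        · have habs' : |a| = -a := abs_of_neg hneg
          rw [habs', show a*(2*τ/(-a))/2 = -τ from by field_simp; try ring, Qf_neg_v]
          exact Q_tau_nonneg σ τ hp hτpos hτπ hLτ _ _ hscθ'
        · have habs' : |a| = a := abs_of_pos hpos
          rw [habs', show a*(2*τ/a)/2 = τ from by field_simp; try ring]
          exact Q_tau_nonneg σ τ hp hτpos hτπ hLτ _ _ hscθ
      nlinarith
    have e2 : 0 ≤ Jac σ a θ (2*π/|a|) := by
      rw [jac_closed σ θ a ha]
      have hQ : Qf σ (a*(2*π/|a|)/2) (sin θ) (cos θ) ≤ 0 := by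
        rcases lt_or_gt_of_ne ha with hneg | hpos
        · have habs' : |a| = -a := abs_of_neg hneg
          rw [habs', show a*(2*π/(-a))/2 = -π from by field_simp; try ring, Qf_neg_v]
          exact Q_pi_nonpos σ _ _
        · have habs' : |a| = a := abs_of_pos hpos
          rw [habs', show a*(2*π/a)/2 = π from by field_simp; try ring]
          exact Q_pi_nonpos σ _ _
      nlinarith
    have hcont : ContinuousOn (fun t => Jac σ a θ t) (Set.Icc (2*τ/|a|) (2*π/|a|)) := by
      have heq : (fun t => Jac σ a θ t)
          = fun t => -4*(1/a)^4 * Qf σ (a*t/2) (sin θ) (cos θ) :=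
        funext (jac_closed σ θ a ha)
      rw [heq]
      have : Continuous (fun t : ℝ => -4*(1/a)^4 * Qf σ (a*t/2) (sin θ) (cos θ)) := by
        simp only [Qf, Dfun, Lfun]
        fun_prop
      exact this.continuousOn
    obtain ⟨t0, ht0, hJ0⟩ := intermediate_value_Icc ht12 hcont ⟨e1, e2⟩
    exact ⟨t0, ht0, hJ0⟩
end

section
/- Let σ = π/2. Then for every a ≠ 0, θ ∈ ℝ and t > 0, one has Jac(a,θ,t) = (t cos²θ / a³)(at cos(at) − sin(at)); consequently, if cos θ ≠ 0, the smallest t > 0 with Jac(a,θ,t) = 0 equals s₁/|a|, where s₁ is the smallest positive solution of tan s = s. -/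
open Real

lemma hx_bg (θ t b : ℝ) : xGeo (π/2) b θ t = cos θ * sin (b*t) * b⁻¹ := by
  simp [xGeo, Real.cos_pi_div_two]; ring

lemma hz_bg (θ t b : ℝ) :
    zGeo (π/2) b θ t = (cos (2*θ) + 1) * (2*b*t - sin (2*b*t)) / (8*b^2) := by
  simp [zGeo, Real.cos_pi_div_two, Real.sin_pi_div_two]; ring

lemma hy_bg (θ t b : ℝ) (hb : b ≠ 0) : yGeo (π/2) b θ t = t * sin θ := by
  simp [yGeo, Real.cos_pi_div_two, Real.sin_pi_div_two]; field_simp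

lemma dxa_bg (a θ t : ℝ) (ha : a ≠ 0) :
    deriv (fun a' => xGeo (π/2) a' θ t) a = cos θ * (t * cos (a*t) / a - sin (a*t) / a^2) := by
  have hfun : (fun a' => xGeo (π/2) a' θ t) = fun a' => cos θ * sin (a'*t) * a'⁻¹ := by
    funext b; exact hx_bg θ t b
  rw [hfun]
  have h1 : HasDerivAt (fun b : ℝ => sin (b*t)) (cos (a*t) * t) a := by
    simpa [Function.comp_def] using (Real.hasDerivAt_sin (a*t)).comp a ((hasDerivAt_id a).mul_const t)
  have h := (h1.const_mul (cos θ)).mul (hasDerivAt_inv ha)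
  rw [HasDerivAt.deriv (f := fun a' => cos θ * sin (a'*t) * a'⁻¹) h]; field_simp; ring

lemma dxθ_bg (a θ t : ℝ) :
    deriv (fun θ' => xGeo (π/2) a θ' t) θ = -(sin θ * sin (a*t)) / a := by
  have hfun : (fun θ' => xGeo (π/2) a θ' t) = fun θ' => cos θ' * (sin (a*t) * a⁻¹) := by
    funext b; rw [hx_bg]; ring
  rw [hfun]
  have h := (Real.hasDerivAt_cos θ).mul_const (sin (a*t) * a⁻¹)
  rw [h.deriv]; field_simp

lemma dxt_bg (a θ t : ℝ) (ha : a ≠ 0) :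
    deriv (fun t' => xGeo (π/2) a θ t') t = cos θ * cos (a*t) := by
  have hfun : (fun t' => xGeo (π/2) a θ t') = fun t' => cos θ * sin (a*t') * a⁻¹ := by
    funext b; exact hx_bg θ b a
  rw [hfun]
  have h1 : HasDerivAt (fun t' : ℝ => sin (a*t')) (cos (a*t) * a) t := by
    simpa [Function.comp_def] using (Real.hasDerivAt_sin (a*t)).comp t ((hasDerivAt_id t).const_mul a)
  have h := (h1.const_mul (cos θ)).mul_const a⁻¹
  rw [h.deriv]; field_simp

lemma dya_bg (a θ t : ℝ) (ha : a ≠ 0) :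
    deriv (fun a' => yGeo (π/2) a' θ t) a = 0 := by
  have hev : (fun a' => yGeo (π/2) a' θ t) =ᶠ[nhds a] (fun _ => t * sin θ) := by
    filter_upwards [eventually_ne_nhds ha] with b hb
    exact hy_bg θ t b hb
  rw [hev.deriv_eq, deriv_const]

lemma dyθ_bg (a θ t : ℝ) (ha : a ≠ 0) :
    deriv (fun θ' => yGeo (π/2) a θ' t) θ = t * cos θ := by
  have hfun : (fun θ' => yGeo (π/2) a θ' t) = fun θ' => t * sin θ' := by
    funext b; exact hy_bg b t a ha
  rw [hfun]
  have h := (Real.hasDerivAt_sin θ).const_mul t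
  rw [h.deriv]

lemma dyt_bg (a θ t : ℝ) (ha : a ≠ 0) :
    deriv (fun t' => yGeo (π/2) a θ t') t = sin θ := by
  have hfun : (fun t' => yGeo (π/2) a θ t') = fun t' => t' * sin θ := by
    funext b; exact hy_bg θ b a ha
  rw [hfun]
  have h := hasDerivAt_mul_const (sin θ) (x := t)
  rw [h.deriv]

lemma dza_bg (a θ t : ℝ) (ha : a ≠ 0) :
    deriv (fun a' => zGeo (π/2) a' θ t) a
      = (cos (2*θ) + 1) * ((2*t - 2*t*cos (2*(a*t)))/(8*a^2) - t/(2*a^2) + sin (2*(a*t))/(4*a^3)) := by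
  have hfun : (fun a' => zGeo (π/2) a' θ t)
      = fun b => ((cos (2*θ) + 1) * (2*b*t - sin (2*b*t))) / (8*b^2) := by
    funext b; rw [hz_bg]
  rw [hfun]
  have hu : HasDerivAt (fun b : ℝ => (cos (2*θ) + 1) * (2*b*t - sin (2*b*t)))
      ((cos (2*θ) + 1) * (2*t - cos (2*a*t) * (2*t))) a := by
    have hs : HasDerivAt (fun b : ℝ => sin (2*b*t)) (cos (2*a*t) * (2*t)) a := by
      have hin : HasDerivAt (fun b : ℝ => 2*b*t) (2*t) a := by
        simpa using ((hasDerivAt_id a).const_mul 2).mul_const t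
      simpa [Function.comp_def] using (Real.hasDerivAt_sin (2*a*t)).comp a hin
    have h2 : HasDerivAt (fun b : ℝ => 2*b*t) (2*t) a := by
      simpa using ((hasDerivAt_id a).const_mul 2).mul_const t
    exact ((h2.sub hs).const_mul _)
  have hv : HasDerivAt (fun b : ℝ => 8*b^2) (8*(2*a)) a := by
    simpa using (hasDerivAt_pow 2 a).const_mul 8
  have hv0 : (8:ℝ)*a^2 ≠ 0 := by positivity
  have h := hu.div hv hv0
  rw [HasDerivAt.deriv (f := fun b => (cos (2*θ) + 1) * (2*b*t - sin (2*b*t)) / (8*b^2)) h]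
  rw [show 2*(a*t) = 2*a*t by ring]
  field_simp; ring

lemma dzθ_bg (a θ t : ℝ) (ha : a ≠ 0) :
    deriv (fun θ' => zGeo (π/2) a θ' t) θ
      = -(sin (2*θ) * t)/(2*a) + sin (2*θ) * sin (2*(a*t))/(4*a^2) := by
  have hfun : (fun θ' => zGeo (π/2) a θ' t)
      = fun θ' => (cos (2*θ') + 1) * ((2*a*t - sin (2*a*t)) / (8*a^2)) := by
    funext b; rw [hz_bg]; ring
  rw [hfun]
  have hc : HasDerivAt (fun θ' : ℝ => cos (2*θ')) (-sin (2*θ) * 2) θ := by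
    simpa [Function.comp_def] using (Real.hasDerivAt_cos (2*θ)).comp θ ((hasDerivAt_id θ).const_mul 2)
  have h := (hc.add_const 1).mul_const ((2*a*t - sin (2*a*t)) / (8*a^2))
  rw [h.deriv]
  rw [show 2*(a*t) = 2*a*t by ring]
  field_simp; ring

lemma dzt_bg (a θ t : ℝ) (ha : a ≠ 0) :
    deriv (fun t' => zGeo (π/2) a θ t') t = (cos (2*θ) + 1) * (1 - cos (2*(a*t)))/(4*a) := by
  have hfun : (fun t' => zGeo (π/2) a θ t')
      = fun t' => ((cos (2*θ) + 1)/(8*a^2)) * (2*a*t' - sin (2*a*t')) := by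
    funext b; rw [hz_bg]; ring
  rw [hfun]
  have hs : HasDerivAt (fun t' : ℝ => sin (2*a*t')) (cos (2*a*t) * (2*a)) t := by
    have hin : HasDerivAt (fun t' : ℝ => 2*a*t') (2*a) t := by
      simpa using (hasDerivAt_id t).const_mul (2*a)
    simpa [Function.comp_def] using (Real.hasDerivAt_sin (2*a*t)).comp t hin
  have h2 : HasDerivAt (fun t' : ℝ => 2*a*t') (2*a) t := by
    simpa using (hasDerivAt_id t).const_mul (2*a)
  have h := (h2.sub hs).const_mul ((cos (2*θ) + 1)/(8*a^2))
  rw [HasDerivAt.deriv (f := fun t' => (cos (2*θ) + 1)/(8*a^2) * (2*a*t' - sin (2*a*t'))) h]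
  rw [show 2*(a*t) = 2*a*t by ring]
  field_simp; ring

lemma jac_eq_bg (a θ t : ℝ) (ha : a ≠ 0) :
    Jac (π/2) a θ t = (t * cos θ ^ 2 / a ^ 3) * (a * t * cos (a * t) - sin (a * t)) := by
  unfold Jac
  rw [dxa_bg a θ t ha, dxθ_bg a θ t, dxt_bg a θ t ha, dya_bg a θ t ha, dyθ_bg a θ t ha,
    dyt_bg a θ t ha, dza_bg a θ t ha, dzθ_bg a θ t ha, dzt_bg a θ t ha]
  rw [Matrix.det_fin_three]
  simp only [Matrix.cons_val', Matrix.cons_val_zero, Matrix.cons_val_one, Matrix.head_cons,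
    Matrix.empty_val', Matrix.cons_val_fin_one, Matrix.head_fin_const, Matrix.cons_val_two,
    Matrix.tail_cons, Matrix.of_apply]
  rw [Real.sin_two_mul (a*t), Real.cos_two_mul (a*t), Real.sin_two_mul θ, Real.cos_two_mul θ]
  have h2 := sin_sq_add_cos_sq θ
  field_simp
  linear_combination (64 * cos θ^2 * (t * a) * (t * a * cos (t*a) - sin (t*a))) * h2

/-- In the Baouendi–Goulaouic case `σ = π/2`: for every `a ≠ 0`, `θ` and `t > 0`,
`Jac(a,θ,t) = (t cos²θ / a³)(at cos(at) − sin(at))`; consequently, if `cos θ ≠ 0`,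
the smallest `t > 0` with `Jac(a,θ,t) = 0` is `s₁/|a|`, where `s₁` is the smallest
positive solution of `tan s = s`. -/
theorem stmt8 (a θ s₁ : ℝ) (ha : a ≠ 0)
    (hs₁ : IsLeast {s : ℝ | 0 < s ∧ tan s = s} s₁) :
    (∀ t : ℝ, 0 < t →
      Jac (π / 2) a θ t = (t * cos θ ^ 2 / a ^ 3) * (a * t * cos (a * t) - sin (a * t))) ∧
    (cos θ ≠ 0 →
      IsLeast {t : ℝ | 0 < t ∧ Jac (π / 2) a θ t = 0} (s₁ / |a|)) := by
  obtain ⟨⟨hs₁pos, hs₁tan⟩, hmin⟩ := hs₁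
  have habs : (0:ℝ) < |a| := abs_pos.mpr ha
  refine ⟨fun t _ => jac_eq_bg a θ t ha, fun hθ => ?_⟩
  have hcos₁ : cos s₁ ≠ 0 := by
    intro h
    rw [tan_eq_sin_div_cos, h, div_zero] at hs₁tan
    linarith
  have hsin₁ : sin s₁ = s₁ * cos s₁ := by
    rw [tan_eq_sin_div_cos, div_eq_iff hcos₁] at hs₁tan
    exact hs₁tan
  constructor
  · refine ⟨div_pos hs₁pos habs, ?_⟩
    rw [jac_eq_bg a θ _ ha]
    have h1 : a * (s₁/|a|) * cos (a * (s₁/|a|)) - sin (a * (s₁/|a|)) = 0 := by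
      rcases lt_or_gt_of_ne ha with hneg | hpos
      · have habs' : |a| = -a := abs_of_neg hneg
        have harg : a * (s₁/|a|) = -s₁ := by
          rw [habs', div_neg, mul_neg, ← mul_div_assoc, mul_div_cancel_left₀ _ ha]
        rw [harg, cos_neg, sin_neg, hsin₁]; ring
      · have habs' : |a| = a := abs_of_pos hpos
        have harg : a * (s₁/|a|) = s₁ := by
          rw [habs', ← mul_div_assoc, mul_div_cancel_left₀ _ ha]
        rw [harg, hsin₁]; ring
    rw [h1, mul_zero]
  · rintro t ⟨htpos, hJ⟩
    rw [jac_eq_bg a θ t ha] at hJ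
    have hfac : a * t * cos (a*t) - sin (a*t) = 0 := by
      rcases mul_eq_zero.mp hJ with h | h
      · exact absurd h (div_ne_zero (mul_ne_zero (ne_of_gt htpos) (pow_ne_zero 2 hθ))
          (pow_ne_zero 3 ha))
      · exact h
    have hupos : 0 < |a| * t := mul_pos habs htpos
    have hueq : (|a| * t) * cos (|a| * t) - sin (|a| * t) = 0 := by
      rcases lt_or_gt_of_ne ha with hneg | hpos
      · have habs' : |a| = -a := abs_of_neg hneg
        rw [habs', show -a*t = -(a*t) by ring, cos_neg, sin_neg]
        linear_combination -hfac
      · rw [abs_of_pos hpos]; linear_combination hfac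
    have hcu : cos (|a| * t) ≠ 0 := by
      intro h
      have hs : sin (|a| * t) = 0 := by rw [h] at hueq; linarith
      have hpy := sin_sq_add_cos_sq (|a| * t)
      rw [h, hs] at hpy; norm_num at hpy
    have htan : tan (|a| * t) = |a| * t := by
      rw [tan_eq_sin_div_cos, div_eq_iff hcu]; linarith
    have hle : s₁ ≤ |a| * t := hmin ⟨hupos, htan⟩
    rw [div_le_iff₀ habs, mul_comm]
    exact hle
end

section
/- Let σ ∈ [0, π/2) (so cos σ ≠ 0) and let τ be the smallest positive solution of sin τ cos²σ + τ cos τ sin²σ = 0. Then for every a ∈ (0, 2τ) and every θ ∈ ℝ, the 2×2 determinant 𝔇 = (∂x/∂a)(∂y/∂θ) − (∂y/∂a)(∂x/∂θ), where all partial derivatives are evaluated at (a, θ, 1), is strictly negative. Consequently, for 0 ≤ a < 2τ the ellipses θ ↦ (x(a,θ,1), y(a,θ,1)) are pairwise disjoint. -/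
open Real

/-- The planar projection at time `t = 1` of the geodesic flow, extended to
`a = 0` by its limit `(cos θ, sin θ)`. -/
noncomputable def ellipse (σ a θ : ℝ) : ℝ × ℝ :=
  if a = 0 then (cos θ, sin θ) else (xGeo σ a θ 1, yGeo σ a θ 1)

lemma half_sin (a : ℝ) : sin a = 2 * sin (a/2) * cos (a/2) := by
  rw [show a = 2*(a/2) by ring, sin_two_mul]; norm_num

lemma half_cos (a : ℝ) : cos a = 1 - 2 * sin (a/2) ^ 2 := by
  calc cos a = cos (2*(a/2)) := by congr 1; ring
    _ = cos (a/2)^2 - sin (a/2)^2 := cos_two_mul' _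
    _ = 1 - 2 * sin (a/2)^2 := by linear_combination sin_sq_add_cos_sq (a/2)

lemma aux_sin_gt (b : ℝ) (hb0 : 0 < b) (hbpi : b < π) : b * cos b < sin b := by
  have h : StrictMonoOn (fun x : ℝ => sin x - x * cos x) (Set.Icc 0 π) := by
    apply strictMonoOn_of_deriv_pos (convex_Icc 0 π)
    · exact (continuous_sin.sub (continuous_id.mul continuous_cos)).continuousOn
    · intro x hx
      rw [interior_Icc] at hx
      have hd : HasDerivAt (fun x : ℝ => sin x - x * cos x) (x * sin x) x := by
        have := (hasDerivAt_sin x).sub ((hasDerivAt_id' x).mul (hasDerivAt_cos x))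
        exact this.congr_deriv (by ring)
      rw [hd.deriv]
      exact mul_pos hx.1 (sin_pos_of_pos_of_lt_pi hx.1 hx.2)
  have h2 := h (Set.left_mem_Icc.2 pi_pos.le) ⟨hb0.le, hbpi.le⟩ hb0
  simp only [sin_zero, cos_zero, mul_one, zero_mul, sub_zero] at h2
  linarith


lemma quadneg (A1 A2 B p q : ℝ) (hA2 : A2 < 0) (hdet : 0 < A1 * A2 - B ^ 2)
    (hpq : p ^ 2 + q ^ 2 ≠ 0) : A1 * p ^ 2 + 2 * B * p * q + A2 * q ^ 2 < 0 := by
  have key : A2 * (A1 * p ^ 2 + 2 * B * p * q + A2 * q ^ 2)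
      = (A2 * q + B * p) ^ 2 + (A1 * A2 - B ^ 2) * p ^ 2 := by ring
  have hT0 : 0 < (A2 * q + B * p) ^ 2 + (A1 * A2 - B ^ 2) * p ^ 2 := by
    rcases eq_or_ne p 0 with hp | hp
    · have hq : q ≠ 0 := by
        intro hq; exact hpq (by rw [hp, hq]; ring)
      have h0 : A2 * q + B * p ≠ 0 := by
        rw [hp]; simpa using mul_ne_zero hA2.ne hq
      have h1 : 0 < (A2 * q + B * p) ^ 2 := by positivity
      nlinarith [sq_nonneg p]
    · have h2 : 0 < (A1 * A2 - B ^ 2) * p ^ 2 := mul_pos hdet (by positivity)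
      nlinarith [sq_nonneg (A2 * q + B * p)]
  by_contra hcon
  push_neg at hcon
  nlinarith

/-- Purely algebraic core: negativity of the quadratic form.
`c = cos σ`, `b = a/2`, `sb = sin b`, `cb = cos b`. -/
lemma keyneg (c b sb cb p q : ℝ) (hc : 0 < c) (hc2 : c ^ 2 ≤ 1)
    (hpyth : sb ^ 2 + cb ^ 2 = 1)
    (hsb : 0 < sb) (hκ : b * cb < sb)
    (hφ : 0 < sb * c ^ 2 + b * cb * (1 - c ^ 2)) (hpq : p ^ 2 + q ^ 2 ≠ 0) :
    (c ^ 2 * (4 * sb * (b * cb - sb)) +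
        2 * b * (1 - c ^ 2) * (2 * b * (1 - 2 * sb ^ 2) - 2 * sb * cb)) * p ^ 2
      - 2 * b * (1 - c ^ 2) * c * (4 * sb * (b * cb - sb)) * p * q
      + c ^ 2 * (4 * sb * (b * cb - sb)) * q ^ 2 < 0 := by
  have hg : 4 * sb * (b * cb - sb) < 0 := by nlinarith
  have hψ : b * cb - (1 + b ^ 2 * (1 - c ^ 2)) * sb < 0 := by
    have h1 : 0 ≤ b ^ 2 * (1 - c ^ 2) * sb :=
      mul_nonneg (mul_nonneg (sq_nonneg b) (by linarith)) hsb.le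
    nlinarith
  have hA2 : c ^ 2 * (4 * sb * (b * cb - sb)) < 0 := by
    have h0 : 0 < c ^ 2 := by positivity
    nlinarith
  have hH : 4 * c ^ 2 * (4 * sb * (b * cb - sb))
        + 4 * (2 * b) * (1 - c ^ 2) * ((2 * b) * (1 - 2 * sb ^ 2) - 2 * sb * cb)
        - (2 * b) ^ 2 * (1 - c ^ 2) ^ 2 * (4 * sb * (b * cb - sb))
      = 16 * (sb * c ^ 2 + b * cb * (1 - c ^ 2))
          * (b * cb - (1 + b ^ 2 * (1 - c ^ 2)) * sb) := by
    linear_combination (-16 * b ^ 2 * (1 - c ^ 2)) * hpyth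
  have hdet : 0 < (c ^ 2 * (4 * sb * (b * cb - sb)) +
        2 * b * (1 - c ^ 2) * (2 * b * (1 - 2 * sb ^ 2) - 2 * sb * cb))
        * (c ^ 2 * (4 * sb * (b * cb - sb)))
      - (- (b * (1 - c ^ 2) * c * (4 * sb * (b * cb - sb)))) ^ 2 := by
    have hrhs : 16 * (sb * c ^ 2 + b * cb * (1 - c ^ 2))
        * (b * cb - (1 + b ^ 2 * (1 - c ^ 2)) * sb) < 0 := by
      nlinarith [mul_pos hφ (by linarith : (0:ℝ) < -(b * cb - (1 + b ^ 2 * (1 - c ^ 2)) * sb))]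
    nlinarith [mul_pos (neg_pos.2 hA2) (neg_pos.2 (hH ▸ hrhs))]
  have h := quadneg _ _ _ p q hA2 hdet hpq
  calc (c ^ 2 * (4 * sb * (b * cb - sb)) +
        2 * b * (1 - c ^ 2) * (2 * b * (1 - 2 * sb ^ 2) - 2 * sb * cb)) * p ^ 2
      - 2 * b * (1 - c ^ 2) * c * (4 * sb * (b * cb - sb)) * p * q
      + c ^ 2 * (4 * sb * (b * cb - sb)) * q ^ 2
      = (c ^ 2 * (4 * sb * (b * cb - sb)) +
        2 * b * (1 - c ^ 2) * (2 * b * (1 - 2 * sb ^ 2) - 2 * sb * cb)) * p ^ 2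
        + 2 * (- (b * (1 - c ^ 2) * c * (4 * sb * (b * cb - sb)))) * p * q
        + c ^ 2 * (4 * sb * (b * cb - sb)) * q ^ 2 := by ring
    _ < 0 := h

/-- Auxiliary: the `p`-coordinate of the inverse ellipse map. -/
noncomputable def arsP (σ x y α : ℝ) : ℝ :=
  (sin α * cos σ ^ 2 + α * (1 - cos σ ^ 2)) * x - (cos α - 1) * cos σ * y

/-- Auxiliary: the `q`-coordinate of the inverse ellipse map. -/
noncomputable def arsQ (σ x y α : ℝ) : ℝ :=
  (cos α - 1) * cos σ * x + sin α * y

/-- Auxiliary: the determinant `Q(α)` of the ellipse matrix. -/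
noncomputable def arsDet (σ α : ℝ) : ℝ :=
  2 * cos σ ^ 2 * (1 - cos α) + α * sin α * (1 - cos σ ^ 2)

/-- Auxiliary: squared generalized radius of `(x,y)` w.r.t. the ellipse at `α`. -/
noncomputable def arsF (σ x y α : ℝ) : ℝ :=
  α ^ 2 * (arsP σ x y α ^ 2 + arsQ σ x y α ^ 2) / arsDet σ α ^ 2

lemma arsP_hasDeriv (σ x y α : ℝ) :
    HasDerivAt (arsP σ x y) ((cos α * cos σ ^ 2 + (1 - cos σ ^ 2)) * x + sin α * cos σ * y) α := by
  unfold arsP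
  have h1 : HasDerivAt (fun α : ℝ => (sin α * cos σ ^ 2 + α * (1 - cos σ ^ 2)) * x)
      ((cos α * cos σ ^ 2 + (1 - cos σ ^ 2)) * x) α := by
    simpa using (((hasDerivAt_sin α).mul_const (cos σ ^ 2)).add
      ((hasDerivAt_id α).mul_const (1 - cos σ ^ 2))).mul_const x
  have h2 : HasDerivAt (fun α : ℝ => (cos α - 1) * cos σ * y) (-sin α * cos σ * y) α :=
    (((hasDerivAt_cos α).sub_const 1).mul_const (cos σ)).mul_const y
  have := h1.sub h2
  exact this.congr_deriv (by ring)

lemma arsQ_hasDeriv (σ x y α : ℝ) :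
    HasDerivAt (arsQ σ x y) (-sin α * cos σ * x + cos α * y) α := by
  unfold arsQ
  exact ((((hasDerivAt_cos α).sub_const 1).mul_const (cos σ)).mul_const x).add
    ((hasDerivAt_sin α).mul_const y)

lemma arsDet_hasDeriv (σ α : ℝ) :
    HasDerivAt (arsDet σ) (2 * cos σ ^ 2 * sin α + (sin α + α * cos α) * (1 - cos σ ^ 2)) α := by
  unfold arsDet
  have h1 : HasDerivAt (fun α : ℝ => 2 * cos σ ^ 2 * (1 - cos α)) (2 * cos σ ^ 2 * sin α) α := by
    have := ((hasDerivAt_cos α).const_sub 1).const_mul (2 * cos σ ^ 2)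
    exact this.congr_deriv (by ring)
  have h2 : HasDerivAt (fun α : ℝ => α * sin α * (1 - cos σ ^ 2))
      ((sin α + α * cos α) * (1 - cos σ ^ 2)) α := by
    have := (((hasDerivAt_id α).mul (hasDerivAt_sin α))).mul_const (1 - cos σ ^ 2)
    exact this.congr_deriv (by simp)
  exact h1.add h2

lemma arsDet_eq (σ α : ℝ) : arsDet σ α
    = 4 * sin (α/2) * (sin (α/2) * cos σ ^ 2 + (α/2) * cos (α/2) * (1 - cos σ ^ 2)) := by
  unfold arsDet
  rw [half_sin α, half_cos α]; ring

lemma arsF_hasDeriv (σ x y α : ℝ) (hQ : arsDet σ α ≠ 0) :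
    HasDerivAt (arsF σ x y)
      (((2 * α * (arsP σ x y α ^ 2 + arsQ σ x y α ^ 2)
          + α ^ 2 * (2 * arsP σ x y α * ((cos α * cos σ ^ 2 + (1 - cos σ ^ 2)) * x + sin α * cos σ * y)
            + 2 * arsQ σ x y α * (-sin α * cos σ * x + cos α * y))) * arsDet σ α ^ 2
        - α ^ 2 * (arsP σ x y α ^ 2 + arsQ σ x y α ^ 2)
          * (2 * arsDet σ α * (2 * cos σ ^ 2 * sin α + (sin α + α * cos α) * (1 - cos σ ^ 2))))
        / (arsDet σ α ^ 2) ^ 2) α := by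
  have hp := (arsP_hasDeriv σ x y α).pow 2
  have hq := (arsQ_hasDeriv σ x y α).pow 2
  have hα : HasDerivAt (fun α : ℝ => α ^ 2) (2 * α) α := by
    simpa using hasDerivAt_pow 2 α
  have hN : HasDerivAt (fun α => α ^ 2 * (arsP σ x y α ^ 2 + arsQ σ x y α ^ 2))
      (2 * α * (arsP σ x y α ^ 2 + arsQ σ x y α ^ 2)
        + α ^ 2 * (2 * arsP σ x y α * ((cos α * cos σ ^ 2 + (1 - cos σ ^ 2)) * x + sin α * cos σ * y)
          + 2 * arsQ σ x y α * (-sin α * cos σ * x + cos α * y))) α := by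
    have := hα.mul (hp.add hq)
    exact this.congr_deriv (by simp only [Pi.add_apply, Pi.pow_apply]; push_cast; ring)
  have hD : HasDerivAt (fun α => arsDet σ α ^ 2)
      (2 * arsDet σ α * (2 * cos σ ^ 2 * sin α + (sin α + α * cos α) * (1 - cos σ ^ 2))) α := by
    have := (arsDet_hasDeriv σ α).pow 2
    exact this.congr_deriv (by push_cast; ring)
  have hdiv := hN.div hD (pow_ne_zero 2 hQ)
  exact hdiv

lemma arsDet_pos (σ τ α : ℝ) (hτπ : τ ≤ π)
    (hφ : ∀ b, 0 < b → b < τ → 0 < sin b * cos σ ^ 2 + b * cos b * (1 - cos σ ^ 2))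
    (hα : α ∈ Set.Ioo 0 (2 * τ)) : 0 < arsDet σ α := by
  have hb0 : 0 < α / 2 := by linarith [hα.1]
  have hbτ : α / 2 < τ := by linarith [hα.2]
  have hsb : 0 < sin (α / 2) := sin_pos_of_pos_of_lt_pi hb0 (by linarith)
  rw [arsDet_eq]
  exact mul_pos (by linarith) (hφ _ hb0 hbτ)

lemma arsF_deriv_pos (σ τ x y α : ℝ) (hc : 0 < cos σ) (hτπ : τ ≤ π)
    (hφ : ∀ b, 0 < b → b < τ → 0 < sin b * cos σ ^ 2 + b * cos b * (1 - cos σ ^ 2))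
    (hxy : x ^ 2 + y ^ 2 ≠ 0) (hα : α ∈ Set.Ioo 0 (2 * τ)) :
    0 < deriv (arsF σ x y) α := by
  have hb0 : 0 < α / 2 := by linarith [hα.1]
  have hbτ : α / 2 < τ := by linarith [hα.2]
  have hsb : 0 < sin (α / 2) := sin_pos_of_pos_of_lt_pi hb0 (by linarith)
  have hκ : (α / 2) * cos (α / 2) < sin (α / 2) := aux_sin_gt _ hb0 (by linarith)
  have hφb := hφ _ hb0 hbτ
  have hQpos : 0 < arsDet σ α := arsDet_pos σ τ α hτπ hφ hα
  have hxid : arsDet σ α * x = sin α * arsP σ x y α + (cos α - 1) * cos σ * arsQ σ x y α := by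
    unfold arsP arsQ arsDet
    linear_combination (-(cos σ ^ 2 * x)) * sin_sq_add_cos_sq α
  have hyid : arsDet σ α * y = -((cos α - 1) * cos σ) * arsP σ x y α
      + (sin α * cos σ ^ 2 + α * (1 - cos σ ^ 2)) * arsQ σ x y α := by
    unfold arsP arsQ arsDet
    linear_combination (-(cos σ ^ 2 * y)) * sin_sq_add_cos_sq α
  have hpq : arsP σ x y α ^ 2 + arsQ σ x y α ^ 2 ≠ 0 := by
    intro h0
    have hp : arsP σ x y α = 0 := by nlinarith [sq_nonneg (arsP σ x y α), sq_nonneg (arsQ σ x y α)]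
    have hq : arsQ σ x y α = 0 := by nlinarith [sq_nonneg (arsP σ x y α), sq_nonneg (arsQ σ x y α)]
    rw [hp, hq] at hxid hyid
    have hx0 : x = 0 := by
      have := hxid; field_simp at this; rw [zero_mul] at this
      exact (mul_eq_zero.1 this).resolve_left hQpos.ne'
    have hy0 : y = 0 := by
      have := hyid; field_simp at this; rw [zero_mul] at this
      exact (mul_eq_zero.1 this).resolve_left hQpos.ne'
    exact hxy (by rw [hx0, hy0]; ring)
  have hKEY := keyneg (cos σ) (α/2) (sin (α/2)) (cos (α/2)) (arsP σ x y α) (arsQ σ x y α) hc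
    (by nlinarith [cos_le_one σ, neg_one_le_cos σ]) (sin_sq_add_cos_sq (α/2)) hsb hκ hφb hpq
  rw [(arsF_hasDeriv σ x y α hQpos.ne').deriv]
  have hI2 : (2 * α * (arsP σ x y α ^ 2 + arsQ σ x y α ^ 2)
        + α ^ 2 * (2 * arsP σ x y α * ((cos α * cos σ ^ 2 + (1 - cos σ ^ 2)) * x + sin α * cos σ * y)
          + 2 * arsQ σ x y α * (-sin α * cos σ * x + cos α * y))) * arsDet σ α
        - 2 * (α ^ 2 * (arsP σ x y α ^ 2 + arsQ σ x y α ^ 2))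
          * (2 * cos σ ^ 2 * sin α + (sin α + α * cos α) * (1 - cos σ ^ 2))
      = -2 * α * ((cos σ ^ 2 * (4 * sin (α/2) * ((α/2) * cos (α/2) - sin (α/2))) +
          2 * (α/2) * (1 - cos σ ^ 2) * (2 * (α/2) * (1 - 2 * sin (α/2) ^ 2)
            - 2 * sin (α/2) * cos (α/2))) * arsP σ x y α ^ 2
        - 2 * (α/2) * (1 - cos σ ^ 2) * cos σ * (4 * sin (α/2) * ((α/2) * cos (α/2)
            - sin (α/2))) * arsP σ x y α * arsQ σ x y α
        + cos σ ^ 2 * (4 * sin (α/2) * ((α/2) * cos (α/2) - sin (α/2))) * arsQ σ x y α ^ 2) := by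
    unfold arsP arsQ arsDet
    rw [half_sin α, half_cos α]
    linear_combination ((-16)*α^2*sin (α/2)^3*cos (α/2)*cos σ^2*y^2
      + (-16)*α^2*sin (α/2)^3*cos (α/2)*cos σ^4*x^2 + (-8)*α^3*sin (α/2)^2*cos σ^2*x^2
      + (8)*α^3*sin (α/2)^2*cos σ^4*x^2 + (-16)*α^3*sin (α/2)^3*cos (α/2)*cos σ*x*y
      + (16)*α^3*sin (α/2)^3*cos (α/2)*cos σ^3*x*y + (16)*α^3*sin (α/2)^4*cos σ^2*x^2
      + (-16)*α^3*sin (α/2)^4*cos σ^4*x^2) * sin_sq_add_cos_sq (α/2)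
  have hnum_pos : 0 < (2 * α * (arsP σ x y α ^ 2 + arsQ σ x y α ^ 2)
        + α ^ 2 * (2 * arsP σ x y α * ((cos α * cos σ ^ 2 + (1 - cos σ ^ 2)) * x + sin α * cos σ * y)
          + 2 * arsQ σ x y α * (-sin α * cos σ * x + cos α * y))) * arsDet σ α ^ 2
      - α ^ 2 * (arsP σ x y α ^ 2 + arsQ σ x y α ^ 2)
        * (2 * arsDet σ α * (2 * cos σ ^ 2 * sin α + (sin α + α * cos α) * (1 - cos σ ^ 2))) := by
    have h2α : 0 < 2 * α := by linarith [hα.1]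
    have hval : 0 < -2 * α * ((cos σ ^ 2 * (4 * sin (α/2) * ((α/2) * cos (α/2) - sin (α/2))) +
          2 * (α/2) * (1 - cos σ ^ 2) * (2 * (α/2) * (1 - 2 * sin (α/2) ^ 2)
            - 2 * sin (α/2) * cos (α/2))) * arsP σ x y α ^ 2
        - 2 * (α/2) * (1 - cos σ ^ 2) * cos σ * (4 * sin (α/2) * ((α/2) * cos (α/2)
            - sin (α/2))) * arsP σ x y α * arsQ σ x y α
        + cos σ ^ 2 * (4 * sin (α/2) * ((α/2) * cos (α/2) - sin (α/2))) * arsQ σ x y α ^ 2) := by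
      have h5 := mul_pos h2α (neg_pos.2 hKEY)
      calc (0:ℝ) < 2 * α * -((cos σ ^ 2 * (4 * sin (α/2) * ((α/2) * cos (α/2) - sin (α/2))) +
          2 * (α/2) * (1 - cos σ ^ 2) * (2 * (α/2) * (1 - 2 * sin (α/2) ^ 2)
            - 2 * sin (α/2) * cos (α/2))) * arsP σ x y α ^ 2
        - 2 * (α/2) * (1 - cos σ ^ 2) * cos σ * (4 * sin (α/2) * ((α/2) * cos (α/2)
            - sin (α/2))) * arsP σ x y α * arsQ σ x y α
        + cos σ ^ 2 * (4 * sin (α/2) * ((α/2) * cos (α/2) - sin (α/2))) * arsQ σ x y α ^ 2) := h5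
        _ = -2 * α * ((cos σ ^ 2 * (4 * sin (α/2) * ((α/2) * cos (α/2) - sin (α/2))) +
          2 * (α/2) * (1 - cos σ ^ 2) * (2 * (α/2) * (1 - 2 * sin (α/2) ^ 2)
            - 2 * sin (α/2) * cos (α/2))) * arsP σ x y α ^ 2
        - 2 * (α/2) * (1 - cos σ ^ 2) * cos σ * (4 * sin (α/2) * ((α/2) * cos (α/2)
            - sin (α/2))) * arsP σ x y α * arsQ σ x y α
        + cos σ ^ 2 * (4 * sin (α/2) * ((α/2) * cos (α/2) - sin (α/2))) * arsQ σ x y α ^ 2) := by ring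
    calc (0:ℝ) < (-2 * α * ((cos σ ^ 2 * (4 * sin (α/2) * ((α/2) * cos (α/2) - sin (α/2))) +
          2 * (α/2) * (1 - cos σ ^ 2) * (2 * (α/2) * (1 - 2 * sin (α/2) ^ 2)
            - 2 * sin (α/2) * cos (α/2))) * arsP σ x y α ^ 2
        - 2 * (α/2) * (1 - cos σ ^ 2) * cos σ * (4 * sin (α/2) * ((α/2) * cos (α/2)
            - sin (α/2))) * arsP σ x y α * arsQ σ x y α
        + cos σ ^ 2 * (4 * sin (α/2) * ((α/2) * cos (α/2) - sin (α/2))) * arsQ σ x y α ^ 2)) * arsDet σ α := mul_pos hval hQpos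
      _ = _ := by rw [← hI2]; ring
  exact div_pos hnum_pos (by positivity)

lemma arsF_mono (σ τ x y : ℝ) (hc : 0 < cos σ) (hτπ : τ ≤ π)
    (hφ : ∀ b, 0 < b → b < τ → 0 < sin b * cos σ ^ 2 + b * cos b * (1 - cos σ ^ 2))
    (hxy : x ^ 2 + y ^ 2 ≠ 0) :
    StrictMonoOn (arsF σ x y) (Set.Ioo 0 (2 * τ)) := by
  apply strictMonoOn_of_deriv_pos (convex_Ioo 0 (2 * τ))
  · intro α hα
    exact ((arsF_hasDeriv σ x y α (arsDet_pos σ τ α hτπ hφ hα).ne').differentiableAt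
      ).continuousAt.continuousWithinAt
  · rw [interior_Ioo]
    intro α hα
    exact arsF_deriv_pos σ τ x y α hc hτπ hφ hxy hα

lemma arsF_val (σ τ a θ : ℝ) (hτπ : τ ≤ π)
    (hφ : ∀ b, 0 < b → b < τ → 0 < sin b * cos σ ^ 2 + b * cos b * (1 - cos σ ^ 2))
    (ha : a ∈ Set.Ioo 0 (2 * τ)) :
    arsF σ (xGeo σ a θ 1) (yGeo σ a θ 1) a = 1 := by
  have ha0 : a ≠ 0 := ha.1.ne'
  have hD := (arsDet_pos σ τ a hτπ hφ ha).ne'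
  have hX : xGeo σ a θ 1 = (1/a) * (cos θ * sin a + (cos a - 1) * cos σ * sin θ) := by
    simp [xGeo]
  have hY : yGeo σ a θ 1 = (1/a) * ((sin a - a) * sin θ * cos σ ^ 2
      - (cos a - 1) * cos θ * cos σ + a * sin θ) := by
    simp [yGeo]
  have hP : arsP σ (xGeo σ a θ 1) (yGeo σ a θ 1) a
      = (1/a) * arsP σ (cos θ * sin a + (cos a - 1) * cos σ * sin θ)
          ((sin a - a) * sin θ * cos σ ^ 2 - (cos a - 1) * cos θ * cos σ + a * sin θ) a := by
    unfold arsP; rw [hX, hY]; ring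
  have hQq : arsQ σ (xGeo σ a θ 1) (yGeo σ a θ 1) a
      = (1/a) * arsQ σ (cos θ * sin a + (cos a - 1) * cos σ * sin θ)
          ((sin a - a) * sin θ * cos σ ^ 2 - (cos a - 1) * cos θ * cos σ + a * sin θ) a := by
    unfold arsQ; rw [hX, hY]; ring
  have hkey : (arsP σ (cos θ * sin a + (cos a - 1) * cos σ * sin θ)
        ((sin a - a) * sin θ * cos σ ^ 2 - (cos a - 1) * cos θ * cos σ + a * sin θ) a) ^ 2
      + (arsQ σ (cos θ * sin a + (cos a - 1) * cos σ * sin θ)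
        ((sin a - a) * sin θ * cos σ ^ 2 - (cos a - 1) * cos θ * cos σ + a * sin θ) a) ^ 2
      = arsDet σ a ^ 2 := by
    unfold arsP arsQ arsDet
    linear_combination ((3)*cos σ^4*sin θ^2 + (3)*cos σ^4*cos θ^2 + (-4)*cos a*cos σ^4*sin θ^2
        + (-4)*cos a*cos σ^4*cos θ^2 + (1)*cos a^2*cos σ^4*sin θ^2 + (1)*cos a^2*cos σ^4*cos θ^2
        + (1)*sin a^2*cos σ^4*sin θ^2 + (1)*sin a^2*cos σ^4*cos θ^2 + (2)*a*sin a*cos σ^2*sin θ^2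
        + (2)*a*sin a*cos σ^2*cos θ^2 + (-2)*a*sin a*cos σ^4*sin θ^2 + (-2)*a*sin a*cos σ^4*cos θ^2
        + (-1)*a^2 + (1)*a^2*sin θ^2 + (1)*a^2*cos θ^2 + (2)*a^2*cos σ^2 + (-2)*a^2*cos σ^2*sin θ^2
        + (-2)*a^2*cos σ^2*cos θ^2 + (-1)*a^2*cos σ^4 + (1)*a^2*cos σ^4*sin θ^2
        + (1)*a^2*cos σ^4*cos θ^2) * sin_sq_add_cos_sq a
      + ((4)*cos σ^4 + (-8)*cos a*cos σ^4 + (4)*cos a^2*cos σ^4 + (4)*a*sin a*cos σ^2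
        + (-4)*a*sin a*cos σ^4 + (-4)*a*sin a*cos a*cos σ^2 + (4)*a*sin a*cos a*cos σ^4
        + (1)*a^2 + (-2)*a^2*cos σ^2 + (1)*a^2*cos σ^4 + (-1)*a^2*cos a^2
        + (2)*a^2*cos a^2*cos σ^2 + (-1)*a^2*cos a^2*cos σ^4) * sin_sq_add_cos_sq θ
  unfold arsF
  rw [hP, hQq]
  rw [div_eq_one_iff_eq (by positivity)]
  rw [mul_pow, mul_pow, ← mul_add, hkey]
  field_simp

open Filter Topology in
lemma arsF_tendsto (σ x y : ℝ) :
    Filter.Tendsto (arsF σ x y) (nhdsWithin 0 (Set.Ioi 0)) (nhds (x ^ 2 + y ^ 2)) := by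
  have hmono : nhdsWithin (0:ℝ) (Set.Ioi 0) ≤ nhdsWithin 0 {(0:ℝ)}ᶜ :=
    nhdsWithin_mono 0 (fun t ht => ne_of_gt ht)
  have hs : Filter.Tendsto (fun α : ℝ => sin α / α) (nhdsWithin 0 (Set.Ioi 0)) (nhds 1) := by
    have h := hasDerivAt_sin 0
    rw [hasDerivAt_iff_tendsto_slope] at h
    have h2 : Filter.Tendsto (slope sin 0) (nhdsWithin 0 (Set.Ioi 0)) (nhds 1) := by
      simpa using h.mono_left hmono
    refine h2.congr (fun α => ?_)
    simp [slope_def_field]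
  have hcc : Filter.Tendsto (fun α : ℝ => (cos α - 1) / α) (nhdsWithin 0 (Set.Ioi 0)) (nhds 0) := by
    have h := hasDerivAt_cos 0
    rw [hasDerivAt_iff_tendsto_slope] at h
    have h2 : Filter.Tendsto (slope cos 0) (nhdsWithin 0 (Set.Ioi 0)) (nhds 0) := by
      simpa using h.mono_left hmono
    refine h2.congr (fun α => ?_)
    simp [slope_def_field]
  have hhalf : Filter.Tendsto (fun α : ℝ => α / 2) (nhdsWithin (0:ℝ) (Set.Ioi 0))
      (nhdsWithin 0 (Set.Ioi 0)) := by
    apply tendsto_nhdsWithin_of_tendsto_nhds_of_eventually_within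
    · simpa using (continuous_id.div_const 2).tendsto (0:ℝ) |>.mono_left nhdsWithin_le_nhds
    · filter_upwards [self_mem_nhdsWithin] with t ht
      exact div_pos (Set.mem_Ioi.1 ht) (by norm_num)
  have hs2 : Filter.Tendsto (fun α : ℝ => sin (α/2) / (α/2)) (nhdsWithin 0 (Set.Ioi 0)) (nhds 1) :=
    hs.comp hhalf
  have hnum : Filter.Tendsto (fun α : ℝ =>
        (((sin α / α) * cos σ ^ 2 + (1 - cos σ ^ 2)) * x - ((cos α - 1) / α) * cos σ * y) ^ 2
        + (((cos α - 1) / α) * cos σ * x + (sin α / α) * y) ^ 2)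
      (nhdsWithin 0 (Set.Ioi 0))
      (nhds (((1 * cos σ ^ 2 + (1 - cos σ ^ 2)) * x - 0 * cos σ * y) ^ 2
        + (0 * cos σ * x + 1 * y) ^ 2)) := by
    exact ((((hs.mul_const _).add_const _).mul_const x |>.sub
        ((hcc.mul_const _).mul_const y)).pow 2).add
      ((((hcc.mul_const _).mul_const x).add (hs.mul_const y)).pow 2)
  have hden : Filter.Tendsto (fun α : ℝ =>
        (cos σ ^ 2 * (sin (α/2) / (α/2)) ^ 2 + (sin α / α) * (1 - cos σ ^ 2)) ^ 2)
      (nhdsWithin 0 (Set.Ioi 0))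
      (nhds ((cos σ ^ 2 * 1 ^ 2 + 1 * (1 - cos σ ^ 2)) ^ 2)) :=
    (((hs2.pow 2).const_mul _).add (hs.mul_const _)).pow 2
  have hdiv := hnum.div hden (by norm_num)
  have heq : ∀ᶠ α in nhdsWithin (0:ℝ) (Set.Ioi 0), ((((sin α / α) * cos σ ^ 2 + (1 - cos σ ^ 2)) * x
        - ((cos α - 1) / α) * cos σ * y) ^ 2
        + (((cos α - 1) / α) * cos σ * x + (sin α / α) * y) ^ 2)
        / (cos σ ^ 2 * (sin (α/2) / (α/2)) ^ 2 + (sin α / α) * (1 - cos σ ^ 2)) ^ 2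
      = arsF σ x y α := by
    filter_upwards [self_mem_nhdsWithin] with α hα
    have hα0 : α ≠ 0 := ne_of_gt hα
    have hα2 : α / 2 ≠ 0 := by positivity
    have hden_id : cos σ ^ 2 * (sin (α/2) / (α/2)) ^ 2 + (sin α / α) * (1 - cos σ ^ 2)
        = arsDet σ α / α ^ 2 := by
      unfold arsDet
      rw [show 1 - cos α = 2 * sin (α/2) ^ 2 by rw [half_cos α]; ring]
      field_simp
    have hnum_id : (((sin α / α) * cos σ ^ 2 + (1 - cos σ ^ 2)) * x
          - ((cos α - 1) / α) * cos σ * y) ^ 2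
          + (((cos α - 1) / α) * cos σ * x + (sin α / α) * y) ^ 2
        = (arsP σ x y α ^ 2 + arsQ σ x y α ^ 2) / α ^ 2 := by
      unfold arsP arsQ
      field_simp
    rw [hnum_id, hden_id, div_pow]
    unfold arsF
    rcases eq_or_ne (arsDet σ α) 0 with hD | hD
    · simp [hD]
    · rw [div_div_div_eq]
      rw [div_eq_div_iff (by positivity) (by positivity)]
      ring
  have := hdiv.congr' heq
  convert this using 2
  ring

lemma hasDerivAt_x_a (σ θ : ℝ) {a : ℝ} (ha : a ≠ 0) :
    HasDerivAt (fun a' => xGeo σ a' θ 1)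
      (-(1 / a ^ 2) * (cos θ * sin a + (cos a - 1) * cos σ * sin θ)
        + (1 / a) * (cos θ * cos a - sin a * cos σ * sin θ)) a := by
  have h1 : HasDerivAt (fun a' : ℝ => 1 / a') (-(1 / a ^ 2)) a := by
    simpa [one_div] using hasDerivAt_inv ha
  have h2 : HasDerivAt (fun a' : ℝ => cos θ * sin a' + (cos a' - 1) * cos σ * sin θ)
      (cos θ * cos a - sin a * cos σ * sin θ) a := by
    have := ((hasDerivAt_sin a).const_mul (cos θ)).add
      ((((hasDerivAt_cos a).sub_const 1).mul_const (cos σ)).mul_const (sin θ))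
    exact this.congr_deriv (by ring)
  have h3 := h1.mul h2
  refine h3.congr_of_eventuallyEq (Filter.Eventually.of_forall fun a' => ?_)
  · simp [xGeo]


lemma hasDerivAt_x_θ (σ a θ : ℝ) :
    HasDerivAt (fun θ' => xGeo σ a θ' 1)
      ((1 / a) * (-sin θ * sin a + (cos a - 1) * cos σ * cos θ)) θ := by
  have h2 : HasDerivAt (fun θ' : ℝ => cos θ' * sin a + (cos a - 1) * cos σ * sin θ')
      (-sin θ * sin a + (cos a - 1) * cos σ * cos θ) θ :=
    ((hasDerivAt_cos θ).mul_const (sin a)).add ((hasDerivAt_sin θ).const_mul ((cos a - 1) * cos σ))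
  have h3 := h2.const_mul (1 / a)
  refine h3.congr_of_eventuallyEq (Filter.Eventually.of_forall fun θ' => ?_)
  · simp [xGeo]

lemma hasDerivAt_y_a (σ θ : ℝ) {a : ℝ} (ha : a ≠ 0) :
    HasDerivAt (fun a' => yGeo σ a' θ 1)
      (-(1 / a ^ 2) * ((sin a - a) * sin θ * cos σ ^ 2 - (cos a - 1) * cos θ * cos σ + a * sin θ)
        + (1 / a) * ((cos a - 1) * sin θ * cos σ ^ 2 + sin a * cos θ * cos σ + sin θ)) a := by
  have h1 : HasDerivAt (fun a' : ℝ => 1 / a') (-(1 / a ^ 2)) a := by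
    simpa [one_div] using hasDerivAt_inv ha
  have h2 : HasDerivAt (fun a' : ℝ => (sin a' - a') * sin θ * cos σ ^ 2
      - (cos a' - 1) * cos θ * cos σ + a' * sin θ)
      ((cos a - 1) * sin θ * cos σ ^ 2 + sin a * cos θ * cos σ + sin θ) a := by
    have := ((((hasDerivAt_sin a).sub (hasDerivAt_id a)).mul_const (sin θ)).mul_const
        (cos σ ^ 2)).sub ((((hasDerivAt_cos a).sub_const 1).mul_const (cos θ)).mul_const (cos σ))
      |>.add ((hasDerivAt_id a).mul_const (sin θ))
    exact this.congr_deriv (by ring)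
  have h3 := h1.mul h2
  refine h3.congr_of_eventuallyEq (Filter.Eventually.of_forall fun a' => ?_)
  · simp [yGeo]

lemma hasDerivAt_y_θ (σ a θ : ℝ) :
    HasDerivAt (fun θ' => yGeo σ a θ' 1)
      ((1 / a) * ((sin a - a) * cos θ * cos σ ^ 2 + (cos a - 1) * sin θ * cos σ + a * cos θ)) θ := by
  have h2 : HasDerivAt (fun θ' : ℝ => (sin a - a) * sin θ' * cos σ ^ 2
      - (cos a - 1) * cos θ' * cos σ + a * sin θ')
      ((sin a - a) * cos θ * cos σ ^ 2 + (cos a - 1) * sin θ * cos σ + a * cos θ) θ := by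
    have := ((((hasDerivAt_sin θ).const_mul (sin a - a)).mul_const (cos σ ^ 2)).sub
      (((hasDerivAt_cos θ).const_mul (cos a - 1)).mul_const (cos σ))).add
      ((hasDerivAt_sin θ).const_mul a)
    exact this.congr_deriv (by ring)
  have h3 := h2.const_mul (1 / a)
  refine h3.congr_of_eventuallyEq (Filter.Eventually.of_forall fun θ' => ?_)
  · simp [yGeo]

/-- Part 1 core, assuming the analytic facts. -/
lemma part1core (σ a θ : ℝ) (ha : 0 < a)
    (hc : 0 < cos σ)
    (hsb : 0 < sin (a/2)) (hκ : (a/2) * cos (a/2) < sin (a/2))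
    (hφ : 0 < sin (a/2) * cos σ ^ 2 + (a/2) * cos (a/2) * (1 - cos σ ^ 2)) :
    deriv (fun a' => xGeo σ a' θ 1) a * deriv (fun θ' => yGeo σ a θ' 1) θ
      - deriv (fun a' => yGeo σ a' θ 1) a * deriv (fun θ' => xGeo σ a θ' 1) θ < 0 := by
  rw [(hasDerivAt_x_a σ θ ha.ne').deriv, (hasDerivAt_x_θ σ a θ).deriv,
    (hasDerivAt_y_a σ θ ha.ne').deriv, (hasDerivAt_y_θ σ a θ).deriv]
  have hkey := keyneg (cos σ) (a/2) (sin (a/2)) (cos (a/2)) (cos θ) (sin θ) hc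
    (by nlinarith [cos_le_one σ, neg_one_le_cos σ]) (sin_sq_add_cos_sq (a/2)) hsb hκ hφ
    (by rw [cos_sq_add_sin_sq θ]; norm_num)
  have hiden : (-(1 / a ^ 2) * (cos θ * sin a + (cos a - 1) * cos σ * sin θ)
        + (1 / a) * (cos θ * cos a - sin a * cos σ * sin θ))
        * ((1 / a) * ((sin a - a) * cos θ * cos σ ^ 2 + (cos a - 1) * sin θ * cos σ + a * cos θ))
      - (-(1 / a ^ 2) * ((sin a - a) * sin θ * cos σ ^ 2 - (cos a - 1) * cos θ * cos σ + a * sin θ)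
        + (1 / a) * ((cos a - 1) * sin θ * cos σ ^ 2 + sin a * cos θ * cos σ + sin θ))
        * ((1 / a) * (-sin θ * sin a + (cos a - 1) * cos σ * cos θ))
      = ((cos σ ^ 2 * (4 * sin (a/2) * ((a/2) * cos (a/2) - sin (a/2))) +
          2 * (a/2) * (1 - cos σ ^ 2) * (2 * (a/2) * (1 - 2 * sin (a/2) ^ 2)
            - 2 * sin (a/2) * cos (a/2))) * cos θ ^ 2
        - 2 * (a/2) * (1 - cos σ ^ 2) * cos σ * (4 * sin (a/2) * ((a/2) * cos (a/2)
            - sin (a/2))) * cos θ * sin θ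
        + cos σ ^ 2 * (4 * sin (a/2) * ((a/2) * cos (a/2) - sin (a/2))) * sin θ ^ 2) / a ^ 3 := by
    have ha' : a ≠ 0 := ha.ne'
    have step2 : (a * (cos θ * cos a - sin a * cos σ * sin θ)
          - (cos θ * sin a + (cos a - 1) * cos σ * sin θ))
          * ((sin a - a) * cos θ * cos σ ^ 2 + (cos a - 1) * sin θ * cos σ + a * cos θ)
        - (a * ((cos a - 1) * sin θ * cos σ ^ 2 + sin a * cos θ * cos σ + sin θ)
          - ((sin a - a) * sin θ * cos σ ^ 2 - (cos a - 1) * cos θ * cos σ + a * sin θ))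
          * (-sin θ * sin a + (cos a - 1) * cos σ * cos θ)
        = (cos σ ^ 2 * (4 * sin (a/2) * ((a/2) * cos (a/2) - sin (a/2))) +
            2 * (a/2) * (1 - cos σ ^ 2) * (2 * (a/2) * (1 - 2 * sin (a/2) ^ 2)
              - 2 * sin (a/2) * cos (a/2))) * cos θ ^ 2
          - 2 * (a/2) * (1 - cos σ ^ 2) * cos σ * (4 * sin (a/2) * ((a/2) * cos (a/2)
              - sin (a/2))) * cos θ * sin θ
          + cos σ ^ 2 * (4 * sin (a/2) * ((a/2) * cos (a/2) - sin (a/2))) * sin θ ^ 2 := by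
      rw [half_sin a, half_cos a]
      linear_combination (-4*sin (a/2)^2*cos σ^2*(sin θ^2 + cos θ^2)
        + 4*a*sin (a/2)^2*cos σ*cos θ*sin θ
        - 4*a*sin (a/2)^2*cos σ^3*cos θ*sin θ) * sin_sq_add_cos_sq (a/2)
    rw [← step2]
    field_simp
    ring
  rw [hiden]
  exact div_neg_of_neg_of_pos hkey (by positivity)

open Filter Topology in
lemma ars_zero_case (σ τ θ θ' a' : ℝ) (hc : 0 < cos σ) (hτπ : τ ≤ π)
    (hφ : ∀ b, 0 < b → b < τ → 0 < sin b * cos σ ^ 2 + b * cos b * (1 - cos σ ^ 2))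
    (ha'I : a' ∈ Set.Ioo 0 (2 * τ))
    (h1 : xGeo σ a' θ' 1 = cos θ) (h2 : yGeo σ a' θ' 1 = sin θ) : False := by
  have hF : arsF σ (cos θ) (sin θ) a' = 1 := by
    rw [← h1, ← h2]; exact arsF_val σ τ a' θ' hτπ hφ ha'I
  have hxy : (cos θ) ^ 2 + (sin θ) ^ 2 ≠ 0 := by rw [cos_sq_add_sin_sq]; norm_num
  have hmono := arsF_mono σ τ (cos θ) (sin θ) hc hτπ hφ hxy
  have hm : a' / 2 ∈ Set.Ioo 0 (2 * τ) :=
    ⟨by linarith [ha'I.1], by linarith [ha'I.1, ha'I.2]⟩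
  have hlt : arsF σ (cos θ) (sin θ) (a' / 2) < 1 := by
    have := hmono hm ha'I (by linarith [ha'I.1])
    rwa [hF] at this
  have hub : ∀ᶠ α in nhdsWithin (0:ℝ) (Set.Ioi 0),
      arsF σ (cos θ) (sin θ) α ≤ arsF σ (cos θ) (sin θ) (a' / 2) := by
    filter_upwards [Ioo_mem_nhdsGT_of_mem
      (Set.left_mem_Ico.2 (by linarith [ha'I.1] : (0:ℝ) < a' / 2))] with α hα
    exact (hmono ⟨hα.1, by linarith [hα.2, ha'I.2, ha'I.1]⟩ hm hα.2).le
  have hlim := arsF_tendsto σ (cos θ) (sin θ)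
  have hle := le_of_tendsto hlim hub
  rw [cos_sq_add_sin_sq] at hle
  linarith

/-- For `σ ∈ [0,π/2)` and `τ` the smallest positive solution of
`sin τ cos²σ + τ cos τ sin²σ = 0`: for every `a ∈ (0,2τ)` and `θ`, the determinant
`𝔇 = (∂x/∂a)(∂y/∂θ) − (∂y/∂a)(∂x/∂θ)` at `(a,θ,1)` is strictly negative; hence the
ellipses `θ ↦ (x(a,θ,1), y(a,θ,1))`, `0 ≤ a < 2τ`, are pairwise disjoint. -/
theorem stmt11 (σ τ : ℝ) (hσ : σ ∈ Set.Ico 0 (π / 2))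
    (hτ : IsLeast {s : ℝ | 0 < s ∧ sin s * cos σ ^ 2 + s * cos s * sin σ ^ 2 = 0} τ) :
    (∀ a ∈ Set.Ioo (0 : ℝ) (2 * τ), ∀ θ : ℝ,
      deriv (fun a' => xGeo σ a' θ 1) a * deriv (fun θ' => yGeo σ a θ' 1) θ
        - deriv (fun a' => yGeo σ a' θ 1) a * deriv (fun θ' => xGeo σ a θ' 1) θ < 0) ∧
    (∀ a ∈ Set.Ico (0 : ℝ) (2 * τ), ∀ a' ∈ Set.Ico (0 : ℝ) (2 * τ), a ≠ a' →
      ∀ θ θ' : ℝ, ellipse σ a θ ≠ ellipse σ a' θ') := by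
  have hc : 0 < cos σ := cos_pos_of_mem_Ioo ⟨by linarith [hσ.1, pi_pos], hσ.2⟩
  have hτpos : 0 < τ := hτ.1.1
  have hφc : Continuous (fun b => sin b * cos σ ^ 2 + b * cos b * sin σ ^ 2) := by fun_prop
  have hφpos_half : ∀ b : ℝ, 0 < b → b ≤ π/2
      → 0 < sin b * cos σ ^ 2 + b * cos b * sin σ ^ 2 := by
    intro b hb0 hb2
    have h1 : 0 < sin b := sin_pos_of_pos_of_lt_pi hb0 (by linarith [pi_pos])
    have h2 : 0 ≤ cos b := cos_nonneg_of_mem_Icc ⟨by linarith, hb2⟩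
    have h3 : 0 < sin b * cos σ ^ 2 := by positivity
    have h4 : 0 ≤ b * cos b * sin σ ^ 2 := by positivity
    linarith
  have hτπ : τ ≤ π := by
    have h2 : sin π * cos σ ^ 2 + π * cos π * sin σ ^ 2 ≤ 0 := by
      simp only [sin_pi, cos_pi]
      nlinarith [pi_pos, sq_nonneg (sin σ)]
    have h1 : 0 ≤ sin (π/2) * cos σ ^ 2 + (π/2) * cos (π/2) * sin σ ^ 2 :=
      (hφpos_half _ (by positivity) le_rfl).le
    obtain ⟨r, hr, hr0⟩ := intermediate_value_Icc' (by linarith [pi_pos])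
      hφc.continuousOn ⟨h2, h1⟩
    have : τ ≤ r := hτ.2 ⟨by linarith [hr.1, pi_pos], hr0⟩
    linarith [hr.2]
  have hφmain : ∀ b, 0 < b → b < τ → 0 < sin b * cos σ ^ 2 + b * cos b * sin σ ^ 2 := by
    intro b hb1 hb2
    by_contra hcon
    push_neg at hcon
    rcases eq_or_lt_of_le hcon with heqq | hlt
    · exact absurd (hτ.2 ⟨hb1, heqq⟩) (not_le.2 hb2)
    · have hb3 : π/2 < b := by
        by_contra h
        push_neg at h
        exact absurd (hφpos_half b hb1 h) (not_lt.2 hlt.le)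
      have h1 : 0 ≤ sin (π/2) * cos σ ^ 2 + (π/2) * cos (π/2) * sin σ ^ 2 :=
        (hφpos_half _ (by positivity) le_rfl).le
      obtain ⟨r, hr, hr0⟩ := intermediate_value_Icc' (le_of_lt hb3)
        hφc.continuousOn ⟨hlt.le, h1⟩
      have : τ ≤ r := hτ.2 ⟨by linarith [hr.1, pi_pos], hr0⟩
      linarith [hr.2]
  have hφ' : ∀ b, 0 < b → b < τ → 0 < sin b * cos σ ^ 2 + b * cos b * (1 - cos σ ^ 2) := by
    intro b h1 h2
    have := hφmain b h1 h2
    rwa [sin_sq σ] at this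
  constructor
  · intro a ha θ
    have hb0 : 0 < a/2 := by linarith [ha.1]
    have hbτ : a/2 < τ := by linarith [ha.2]
    exact part1core σ a θ ha.1 hc (sin_pos_of_pos_of_lt_pi hb0 (by linarith))
      (aux_sin_gt _ hb0 (by linarith)) (hφ' _ hb0 hbτ)
  · intro a ha a' ha' hne θ θ' heq
    rcases eq_or_ne a 0 with h0 | h0
    · rcases eq_or_ne a' 0 with h0' | h0'
      · exact hne (h0.trans h0'.symm)
      · have ha'I : a' ∈ Set.Ioo 0 (2*τ) := ⟨lt_of_le_of_ne ha'.1 (Ne.symm h0'), ha'.2⟩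
        have e1 : xGeo σ a' θ' 1 = cos θ := by
          have := congrArg Prod.fst heq
          simpa [ellipse, h0, h0'] using this.symm
        have e2 : yGeo σ a' θ' 1 = sin θ := by
          have := congrArg Prod.snd heq
          simpa [ellipse, h0, h0'] using this.symm
        exact ars_zero_case σ τ θ θ' a' hc hτπ hφ' ha'I e1 e2
    · rcases eq_or_ne a' 0 with h0' | h0'
      · have haI : a ∈ Set.Ioo 0 (2*τ) := ⟨lt_of_le_of_ne ha.1 (Ne.symm h0), ha.2⟩
        have e1 : xGeo σ a θ 1 = cos θ' := by
          have := congrArg Prod.fst heq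
          simpa [ellipse, h0, h0'] using this
        have e2 : yGeo σ a θ 1 = sin θ' := by
          have := congrArg Prod.snd heq
          simpa [ellipse, h0, h0'] using this
        exact ars_zero_case σ τ θ' θ a hc hτπ hφ' haI e1 e2
      · have haI : a ∈ Set.Ioo 0 (2*τ) := ⟨lt_of_le_of_ne ha.1 (Ne.symm h0), ha.2⟩
        have ha'I : a' ∈ Set.Ioo 0 (2*τ) := ⟨lt_of_le_of_ne ha'.1 (Ne.symm h0'), ha'.2⟩
        have e1 : xGeo σ a' θ' 1 = xGeo σ a θ 1 := by
          have := congrArg Prod.fst heq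
          simpa [ellipse, h0, h0'] using this.symm
        have e2 : yGeo σ a' θ' 1 = yGeo σ a θ 1 := by
          have := congrArg Prod.snd heq
          simpa [ellipse, h0, h0'] using this.symm
        have hF1 : arsF σ (xGeo σ a θ 1) (yGeo σ a θ 1) a = 1 :=
          arsF_val σ τ a θ hτπ hφ' haI
        have hF2 : arsF σ (xGeo σ a θ 1) (yGeo σ a θ 1) a' = 1 := by
          rw [← e1, ← e2]; exact arsF_val σ τ a' θ' hτπ hφ' ha'I
        have hxy : (xGeo σ a θ 1) ^ 2 + (yGeo σ a θ 1) ^ 2 ≠ 0 := by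
          intro h
          have hX : xGeo σ a θ 1 = 0 := by
            nlinarith [sq_nonneg (xGeo σ a θ 1), sq_nonneg (yGeo σ a θ 1)]
          have hY : yGeo σ a θ 1 = 0 := by
            nlinarith [sq_nonneg (xGeo σ a θ 1), sq_nonneg (yGeo σ a θ 1)]
          rw [hX, hY] at hF1
          have : arsF σ 0 0 a = 0 := by simp [arsF, arsP, arsQ]
          rw [this] at hF1
          norm_num at hF1
        have hmono := arsF_mono σ τ (xGeo σ a θ 1) (yGeo σ a θ 1) hc hτπ hφ' hxy
        rcases hne.lt_or_gt with hlt | hlt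
        · have := hmono haI ha'I hlt
          rw [hF1, hF2] at this
          exact lt_irrefl 1 this
        · have := hmono ha'I haI hlt
          rw [hF1, hF2] at this
          exact lt_irrefl 1 this
end

section
/- Let σ ∈ [0, π/2], and let τ, θ⁺ ∈ ℝ satisfy sin τ cos²σ + τ cos τ sin²σ = 0, cos τ ≠ 0, and cos σ cos θ⁺ sin τ + cos τ sin θ⁺ = 0. Then for every a ≠ 0, γ(a, θ⁺, 2τ/a) = (x⁺(a), y⁺(a), z⁺(a)) where x⁺(a) = (2/a) tan τ (cos²τ + sin²τ cos²σ) cos θ⁺, y⁺(a) = −(2/a) tan τ (cos²τ + sin²τ cos²σ) sin θ⁺, and z⁺(a) = τ/a² − (tan τ / a²)(cos²τ − sin²τ)(cos²τ + sin²τ cos²σ). -/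
open Real

/-- Explicit parametrization of the boundary curve of the cut locus in the
half-plane `P₊`: under the stated relations on `τ` and `θ⁺`, for every `a ≠ 0`
one has `γ(a, θ⁺, 2τ/a) = (x⁺(a), y⁺(a), z⁺(a))`. -/
theorem stmt12 (σ τ θp : ℝ) (hσ : σ ∈ Set.Icc 0 (π / 2))
    (hτ : sin τ * cos σ ^ 2 + τ * cos τ * sin σ ^ 2 = 0)
    (hcos : cos τ ≠ 0)
    (hθp : cos σ * cos θp * sin τ + cos τ * sin θp = 0)
    (a : ℝ) (ha : a ≠ 0) :
    xGeo σ a θp (2 * τ / a)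
        = (2 / a) * tan τ * (cos τ ^ 2 + sin τ ^ 2 * cos σ ^ 2) * cos θp ∧
    yGeo σ a θp (2 * τ / a)
        = -(2 / a) * tan τ * (cos τ ^ 2 + sin τ ^ 2 * cos σ ^ 2) * sin θp ∧
    zGeo σ a θp (2 * τ / a)
        = τ / a ^ 2 - (tan τ / a ^ 2) * (cos τ ^ 2 - sin τ ^ 2)
            * (cos τ ^ 2 + sin τ ^ 2 * cos σ ^ 2) := by
  
  have h2 : a * (2 * τ / a) = 2 * τ := by field_simp
  have h4 : 2 * a * (2 * τ / a) = 2 * (2 * τ) := by field_simp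
  have pS := sin_sq_add_cos_sq σ
  have pT := sin_sq_add_cos_sq τ
  have pTh := sin_sq_add_cos_sq θp
  refine ⟨?_, ?_, ?_⟩
  · simp only [xGeo]
    rw [h2]
    simp only [Real.sin_two_mul, Real.cos_two_mul, Real.tan_eq_sin_div_cos]
    field_simp
    linear_combination (-2 * cos σ * sin τ ^ 2) * hθp
      + (2 * cos σ * cos τ * sin θp) * pT
  · simp only [yGeo]
    rw [h2]
    simp only [Real.sin_two_mul, Real.cos_two_mul, Real.tan_eq_sin_div_cos]
    field_simp
    linear_combination (2 * sin θp) * hτ + (2 * sin τ * cos τ) * hθp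
      + (-2 * τ * cos τ * sin θp) * pS
      + (-2 * cos σ * cos τ * cos θp + 2 * cos σ ^ 2 * sin τ * sin θp) * pT
  · simp only [zGeo]
    rw [h2, h4]
    simp only [Real.sin_two_mul, Real.cos_two_mul, Real.tan_eq_sin_div_cos]
    field_simp
    linear_combination (-8 + 8 * cos θp ^ 2) * hτ
      + (-8 * sin τ * cos τ * sin θp + 16 * sin τ * cos τ ^ 3 * sin θp
          - 8 * cos σ * cos θp + 24 * cos σ * cos τ ^ 2 * cos θp
          - 16 * cos σ * cos τ ^ 4 * cos θp) * hθp
      + (4 * sin τ * cos τ ^ 2 - 8 * sin τ * cos τ ^ 4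
          + 4 * τ * cos τ) * pS
      + (-8 * sin τ * cos τ ^ 2
          + 8 * cos σ * cos τ * sin θp * cos θp
          - 16 * cos σ * cos τ ^ 3 * sin θp * cos θp
          - 8 * cos σ ^ 2 * sin τ + 16 * cos σ ^ 2 * sin τ * cos τ ^ 2
          - 8 * cos σ ^ 2 * sin τ ^ 3) * pT
      + (8 * sin τ * cos τ ^ 2 - 16 * sin τ * cos τ ^ 4) * pTh
end

section
/- Let σ ∈ (0, π/2]. For every smooth function g on Ω = {(x,y,z) ∈ ℝ³ : x ≠ 0}, setting f(x,y,z) = √(sin σ · |x|) · g(x,y,z), one has at every point of Ω the identity Δ_ω f = √(sin σ · |x|) · ( ∂ₓ²g + (∂_y + x cos σ ∂_z)²g + x² sin²σ ∂_z²g − (3/(4x²)) g ), where Δ_ω f = ∂ₓ²f + (∂_y + x cos σ ∂_z)²f + x² sin²σ ∂_z²f − (1/x)∂ₓf. -/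
open Real

noncomputable section

/-- Partial derivative in the first variable `x`. -/
def Dx (g : ℝ × ℝ × ℝ → ℝ) : ℝ × ℝ × ℝ → ℝ :=
  fun p => deriv (fun s => g (s, p.2.1, p.2.2)) p.1

/-- Partial derivative in the second variable `y`. -/
def Dy (g : ℝ × ℝ × ℝ → ℝ) : ℝ × ℝ × ℝ → ℝ :=
  fun p => deriv (fun s => g (p.1, s, p.2.2)) p.2.1

/-- Partial derivative in the third variable `z`. -/
def Dz (g : ℝ × ℝ × ℝ → ℝ) : ℝ × ℝ × ℝ → ℝ :=
  fun p => deriv (fun s => g (p.1, p.2.1, s)) p.2.2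

/-- The vector field `X₂ = ∂_y + x cos σ ∂_z` acting on functions. -/
def X2op (σ : ℝ) (g : ℝ × ℝ × ℝ → ℝ) : ℝ × ℝ × ℝ → ℝ :=
  fun p => Dy g p + p.1 * cos σ * Dz g p

/-- The intrinsic Laplacian
`Δ_ω f = ∂ₓ²f + (∂_y + x cos σ ∂_z)²f + x² sin²σ ∂_z²f − (1/x)∂ₓf`. -/
def DeltaOmega (σ : ℝ) (g : ℝ × ℝ × ℝ → ℝ) : ℝ × ℝ × ℝ → ℝ :=
  fun p => Dx (Dx g) p + X2op σ (X2op σ g) p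
    + p.1 ^ 2 * sin σ ^ 2 * Dz (Dz g) p - (1 / p.1) * Dx g p

open Filter Topology

private lemma isOpenU : IsOpen {p : ℝ × ℝ × ℝ | p.1 ≠ 0} :=
  isOpen_compl_singleton.preimage continuous_fst

private lemma hasDerivAt_slice (h : ℝ × ℝ × ℝ → ℝ) (p : ℝ × ℝ × ℝ)
    (hd : DifferentiableAt ℝ h p) :
    HasDerivAt (fun s => h (s, p.2.1, p.2.2)) (fderiv ℝ h p ((1:ℝ), (0:ℝ), (0:ℝ))) p.1 := by
  have hι : HasDerivAt (fun s : ℝ => (s, p.2.1, p.2.2)) ((1:ℝ), (0:ℝ), (0:ℝ)) p.1 :=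
    (hasDerivAt_id p.1).prodMk (hasDerivAt_const p.1 (p.2.1, p.2.2))
  have := hd.hasFDerivAt.comp_hasDerivAt p.1 hι
  exact this

private lemma Dx_eq_fderiv (h : ℝ × ℝ × ℝ → ℝ) (p : ℝ × ℝ × ℝ)
    (hd : DifferentiableAt ℝ h p) :
    Dx h p = fderiv ℝ h p ((1:ℝ), (0:ℝ), (0:ℝ)) :=
  (hasDerivAt_slice h p hd).deriv

private lemma sliceDx (h : ℝ × ℝ × ℝ → ℝ) (p : ℝ × ℝ × ℝ)
    (hd : DifferentiableAt ℝ h p) :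
    HasDerivAt (fun s => h (s, p.2.1, p.2.2)) (Dx h p) p.1 := by
  rw [Dx_eq_fderiv h p hd]; exact hasDerivAt_slice h p hd

private lemma DxContDiffOn (h : ℝ × ℝ × ℝ → ℝ)
    (hh : ContDiffOn ℝ (⊤ : ℕ∞) h {p : ℝ × ℝ × ℝ | p.1 ≠ 0}) :
    ContDiffOn ℝ (⊤ : ℕ∞) (Dx h) {p : ℝ × ℝ × ℝ | p.1 ≠ 0} := by
  have h1 : ContDiffOn ℝ (⊤ : ℕ∞) (fun p => fderiv ℝ h p ((1:ℝ),(0:ℝ),(0:ℝ)))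
      {p : ℝ × ℝ × ℝ | p.1 ≠ 0} :=
    (hh.fderiv_of_isOpen isOpenU (by simp)).clm_apply contDiffOn_const
  exact h1.congr fun p hp => Dx_eq_fderiv h p
    (((hh.contDiffAt (isOpenU.mem_nhds hp)).differentiableAt (by simp)))

private lemma hasDerivAt_W (σ : ℝ) (hsin : 0 < sin σ) (t : ℝ) (ht : t ≠ 0) :
    HasDerivAt (fun s => Real.sqrt (sin σ * |s|)) (Real.sqrt (sin σ * |t|) / (2 * t)) t := by
  rcases ht.lt_or_gt with htneg | htpos
  · have hmem : (fun s => Real.sqrt (sin σ * |s|)) =ᶠ[nhds t]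
        (fun s => Real.sqrt (sin σ * (-s))) := by
      filter_upwards [Iio_mem_nhds htneg] with s hs
      rw [abs_of_neg (Set.mem_Iio.mp hs)]
    have hinner : HasDerivAt (fun s : ℝ => sin σ * (-s)) (sin σ * (-1)) t := by
      simpa using ((hasDerivAt_id t).neg.const_mul (sin σ))
    have hne : sin σ * (-t) ≠ 0 := (mul_pos hsin (by linarith)).ne'
    have h := ((Real.hasDerivAt_sqrt hne).comp t hinner).congr_of_eventuallyEq hmem
    refine h.congr_deriv ?_
    rw [abs_of_neg htneg]
    have hmul : Real.sqrt (sin σ * (-t)) * Real.sqrt (sin σ * (-t)) = sin σ * (-t) :=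
      Real.mul_self_sqrt (mul_pos hsin (by linarith)).le
    have hsne : Real.sqrt (sin σ * (-t)) ≠ 0 :=
      (Real.sqrt_pos.mpr (mul_pos hsin (by linarith))).ne'
    generalize hA : Real.sqrt (sin σ * (-t)) = A at hmul hsne ⊢
    field_simp
    nlinarith [hmul]
  · have hmem : (fun s => Real.sqrt (sin σ * |s|)) =ᶠ[nhds t]
        (fun s => Real.sqrt (sin σ * s)) := by
      filter_upwards [Ioi_mem_nhds htpos] with s hs
      rw [abs_of_pos (Set.mem_Ioi.mp hs)]
    have hinner : HasDerivAt (fun s : ℝ => sin σ * s) (sin σ * 1) t :=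
      (hasDerivAt_id t).const_mul (sin σ)
    have hne : sin σ * t ≠ 0 := (mul_pos hsin htpos).ne'
    have h := ((Real.hasDerivAt_sqrt hne).comp t hinner).congr_of_eventuallyEq hmem
    refine h.congr_deriv ?_
    rw [abs_of_pos htpos]
    have hmul : Real.sqrt (sin σ * t) * Real.sqrt (sin σ * t) = sin σ * t :=
      Real.mul_self_sqrt (mul_pos hsin htpos).le
    have hsne : Real.sqrt (sin σ * t) ≠ 0 :=
      (Real.sqrt_pos.mpr (mul_pos hsin htpos)).ne'
    generalize hA : Real.sqrt (sin σ * t) = A at hmul hsne ⊢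
    field_simp
    nlinarith [hmul]

private lemma hasDerivAt_W' (σ : ℝ) (hsin : 0 < sin σ) (t : ℝ) (ht : t ≠ 0) :
    HasDerivAt (fun s => Real.sqrt (sin σ * |s|) / (2 * s))
      (-(Real.sqrt (sin σ * |t|) / (4 * t ^ 2))) t := by
  have h2 : HasDerivAt (fun s : ℝ => 2 * s) 2 t := by
    simpa using (hasDerivAt_id t).const_mul (2:ℝ)
  have h := (hasDerivAt_W σ hsin t ht).div h2 (by simp [ht])
  refine h.congr_deriv ?_
  generalize Real.sqrt (sin σ * |t|) = A
  field_simp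
  ring

private lemma Dy_const_mul (W : ℝ → ℝ) (h : ℝ × ℝ × ℝ → ℝ) (p : ℝ × ℝ × ℝ) :
    Dy (fun q => W q.1 * h q) p = W p.1 * Dy h p := by
  simp only [Dy]
  exact deriv_const_mul_field _

private lemma Dz_const_mul (W : ℝ → ℝ) (h : ℝ × ℝ × ℝ → ℝ) (p : ℝ × ℝ × ℝ) :
    Dz (fun q => W q.1 * h q) p = W p.1 * Dz h p := by
  simp only [Dz]
  exact deriv_const_mul_field _

private lemma X2op_const_mul (σ : ℝ) (W : ℝ → ℝ) (h : ℝ × ℝ × ℝ → ℝ) (p : ℝ × ℝ × ℝ) :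
    X2op σ (fun q => W q.1 * h q) p = W p.1 * X2op σ h p := by
  simp only [X2op, Dy_const_mul, Dz_const_mul]
  ring

/-- Conjugation of `Δ_ω` by the unitary change of variable `f = √(sin σ |x|) g`:
for every smooth `g` on `Ω = {x ≠ 0}` one has, on `Ω`,
`Δ_ω f = √(sin σ |x|) (∂ₓ²g + (∂_y + x cos σ ∂_z)²g + x² sin²σ ∂_z²g − 3/(4x²) g)`. -/
theorem stmt15 (σ : ℝ) (hσ : σ ∈ Set.Ioc 0 (π / 2))
    (g : ℝ × ℝ × ℝ → ℝ) (hg : ContDiffOn ℝ (⊤ : ℕ∞) g {p : ℝ × ℝ × ℝ | p.1 ≠ 0}) :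
    ∀ p : ℝ × ℝ × ℝ, p.1 ≠ 0 →
      DeltaOmega σ (fun q => Real.sqrt (sin σ * |q.1|) * g q) p =
        Real.sqrt (sin σ * |p.1|)
          * (Dx (Dx g) p + X2op σ (X2op σ g) p
            + p.1 ^ 2 * sin σ ^ 2 * Dz (Dz g) p - (3 / (4 * p.1 ^ 2)) * g p) := by
  obtain ⟨hσ0, hσ2⟩ := hσ
  have hsin : 0 < sin σ := Real.sin_pos_of_pos_of_lt_pi hσ0 (by linarith [Real.pi_pos])
  have hdg : ∀ q : ℝ × ℝ × ℝ, q.1 ≠ 0 → DifferentiableAt ℝ g q := fun q hq =>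
    (hg.contDiffAt (isOpenU.mem_nhds hq)).differentiableAt (by simp)
  have hDxgC := DxContDiffOn g hg
  have hdDxg : ∀ q : ℝ × ℝ × ℝ, q.1 ≠ 0 → DifferentiableAt ℝ (Dx g) q := fun q hq =>
    (hDxgC.contDiffAt (isOpenU.mem_nhds hq)).differentiableAt (by simp)
  set f : ℝ × ℝ × ℝ → ℝ := fun q => Real.sqrt (sin σ * |q.1|) * g q with hfdef
  -- Dx of f on the open set
  have eq_Dxf : ∀ q : ℝ × ℝ × ℝ, q.1 ≠ 0 →
      Dx f q = Real.sqrt (sin σ * |q.1|) / (2 * q.1) * g q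
        + Real.sqrt (sin σ * |q.1|) * Dx g q := by
    intro q hq
    have h := (hasDerivAt_W σ hsin q.1 hq).mul (sliceDx g q (hdg q hq))
    exact h.deriv
  -- Dy and Dz of f
  have hDyf : Dy f = fun q => Real.sqrt (sin σ * |q.1|) * Dy g q :=
    funext fun q => Dy_const_mul (fun s => Real.sqrt (sin σ * |s|)) g q
  have hDzf : Dz f = fun q => Real.sqrt (sin σ * |q.1|) * Dz g q :=
    funext fun q => Dz_const_mul (fun s => Real.sqrt (sin σ * |s|)) g q
  have hX2f : X2op σ f = fun q => Real.sqrt (sin σ * |q.1|) * X2op σ g q :=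
    funext fun q => X2op_const_mul σ (fun s => Real.sqrt (sin σ * |s|)) g q
  intro p hp
  obtain ⟨x, y, z⟩ := p
  replace hp : x ≠ 0 := hp
  -- second X2op
  have hX2X2 : X2op σ (X2op σ f) (x, y, z)
      = Real.sqrt (sin σ * |x|) * X2op σ (X2op σ g) (x, y, z) := by
    rw [hX2f]
    exact X2op_const_mul σ (fun s => Real.sqrt (sin σ * |s|)) (X2op σ g) (x, y, z)
  -- second Dz
  have hDzDz : Dz (Dz f) (x, y, z)
      = Real.sqrt (sin σ * |x|) * Dz (Dz g) (x, y, z) := by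
    rw [hDzf]
    exact Dz_const_mul (fun s => Real.sqrt (sin σ * |s|)) (Dz g) (x, y, z)
  -- second Dx
  have hDxDx : Dx (Dx f) (x, y, z)
      = (-(Real.sqrt (sin σ * |x|) / (4 * x ^ 2)) * g (x, y, z)
          + Real.sqrt (sin σ * |x|) / (2 * x) * Dx g (x, y, z))
        + (Real.sqrt (sin σ * |x|) / (2 * x) * Dx g (x, y, z)
          + Real.sqrt (sin σ * |x|) * Dx (Dx g) (x, y, z)) := by
    have hev : (fun s => Dx f (s, y, z)) =ᶠ[nhds x]
        (fun s => Real.sqrt (sin σ * |s|) / (2 * s) * g (s, y, z)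
          + Real.sqrt (sin σ * |s|) * Dx g (s, y, z)) := by
      filter_upwards [compl_singleton_mem_nhds hp] with s hs
      exact eq_Dxf (s, y, z) hs
    have hD : HasDerivAt
        (fun s => Real.sqrt (sin σ * |s|) / (2 * s) * g (s, y, z)
          + Real.sqrt (sin σ * |s|) * Dx g (s, y, z))
        ((-(Real.sqrt (sin σ * |x|) / (4 * x ^ 2)) * g (x, y, z)
            + Real.sqrt (sin σ * |x|) / (2 * x) * Dx g (x, y, z))
          + (Real.sqrt (sin σ * |x|) / (2 * x) * Dx g (x, y, z)
            + Real.sqrt (sin σ * |x|) * Dx (Dx g) (x, y, z))) x :=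
      ((hasDerivAt_W' σ hsin x hp).mul (sliceDx g (x, y, z) (hdg _ hp))).add
        ((hasDerivAt_W σ hsin x hp).mul (sliceDx (Dx g) (x, y, z) (hdDxg _ hp)))
    show deriv (fun s => Dx f (s, y, z)) x = _
    rw [hev.deriv_eq, hD.deriv]
  -- put everything together
  have hDxfp := eq_Dxf (x, y, z) hp
  simp only [DeltaOmega]
  rw [hDxDx, hX2X2, hDzDz, hDxfp]
  have hx2 : (x:ℝ) ^ 2 ≠ 0 := pow_ne_zero 2 hp
  field_simp
  ring

end
end
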